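/- arXiv:2209.12436 — 5 statements merged into one kernel-verified Lean document; each statement's English description precedes it below -/
import Mathlib

section
/- For all integers r ≥ 2 and k ≥ 1, the number of r-Stirling permutations of order k equals the product ∏_{j=1}^{k-1} (rj + 1). -/
open scoped Classical

noncomputable section

/-- 1-based word (positions 0,…,n-1, letters 1,…,k) of a function `Fin n → Fin k`. -/
def ofWord {n k : ℕ} (ρ : Fin n → Fin k) : ℕ → ℕ :=
  fun i => if h : i < n then (ρ ⟨i, h⟩ : ℕ) + 1 else 0

/-- `r`-Stirling permutations of order `k`: words over `{1^r,…,k^r}` such that between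
any two equal letters all letters are at least as large. -/
def stirlingSet (r k : ℕ) : Finset (Fin (r * k) → Fin k) :=
  Finset.univ.filter (fun ρ =>
    (∀ a : Fin k, (Finset.univ.filter (fun i => ρ i = a)).card = r) ∧
    (∀ i l j : Fin (r * k), i < l → l < j → ρ i = ρ j → ρ i ≤ ρ l))

/-- Number of leading plateaus of a word of length `n`. -/
def lplatNum (n : ℕ) (w : ℕ → ℕ) : ℕ :=
  ((Finset.range (n - 1)).filter (fun i => w i = w (i + 1) ∧ ∀ j < i, w j ≠ w i)).card

/-- Number of ascent-plateaus of a word of length `n`. -/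
def ascplatNum (n : ℕ) (w : ℕ → ℕ) : ℕ :=
  ((Finset.Ico 1 (n - 1)).filter (fun i => w (i - 1) < w i ∧ w i = w (i + 1))).card

/-- Number of left ascent-plateaus of a word of length `n`. -/
def lascplatNum (n : ℕ) (w : ℕ → ℕ) : ℕ :=
  ((Finset.range (n - 1)).filter
    (fun i => (1 ≤ i ∧ w (i - 1) < w i ∧ w i = w (i + 1)) ∨ (i = 0 ∧ w 0 = w 1))).card

namespace StAux

variable {r k : ℕ}

lemma hrk : r * (k + 1) = r * k + r := by ring

/-- embedding skipping the block `[p, p+r)` -/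
def emb (p : Fin (r * k + 1)) (i : Fin (r * k)) : Fin (r * (k + 1)) :=
  if (i : ℕ) < (p : ℕ) then ⟨i, by have := i.isLt; have h := @hrk r k; omega⟩
  else ⟨(i : ℕ) + r, by have := i.isLt; have h := @hrk r k; omega⟩

lemma emb_val_lt (p : Fin (r * k + 1)) (i : Fin (r * k)) (h : (i : ℕ) < (p : ℕ)) :
    ((emb p i) : ℕ) = (i : ℕ) := by unfold emb; rw [if_pos h]

lemma emb_val_ge (p : Fin (r * k + 1)) (i : Fin (r * k)) (h : ¬ (i : ℕ) < (p : ℕ)) :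
    ((emb p i) : ℕ) = (i : ℕ) + r := by unfold emb; rw [if_neg h]

/-- insert the block of `r` copies of the maximal letter at position `p` -/
def ins (ρ : Fin (r * k) → Fin k) (p : Fin (r * k + 1)) (i : Fin (r * (k + 1))) : Fin (k + 1) :=
  if h1 : (i : ℕ) < (p : ℕ) then (ρ ⟨i, by have := p.isLt; omega⟩).castSucc
  else if h2 : (i : ℕ) < (p : ℕ) + r then Fin.last k
  else (ρ ⟨(i : ℕ) - r, by have := i.isLt; have h := @hrk r k; omega⟩).castSucc

lemma ins_emb (ρ : Fin (r * k) → Fin k) (p : Fin (r * k + 1)) (i : Fin (r * k)) :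
    ins ρ p (emb p i) = (ρ i).castSucc := by
  unfold ins
  by_cases h : (i : ℕ) < (p : ℕ)
  · rw [dif_pos (by rw [emb_val_lt p i h]; exact h)]
    exact congrArg Fin.castSucc (congrArg ρ (Fin.ext (emb_val_lt p i h)))
  · have he := emb_val_ge p i h
    rw [dif_neg (by omega), dif_neg (by omega)]
    exact congrArg Fin.castSucc (congrArg ρ (Fin.ext (by
      show ((emb p i) : ℕ) - r = (i : ℕ); omega)))

lemma emb_lt (p : Fin (r * k + 1)) {i l : Fin (r * k)} (h : i < l) : emb p i < emb p l := by
  rw [Fin.lt_def] at h ⊢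
  by_cases h1 : (i : ℕ) < (p : ℕ) <;> by_cases h2 : (l : ℕ) < (p : ℕ)
  · rw [emb_val_lt p i h1, emb_val_lt p l h2]; omega
  · rw [emb_val_lt p i h1, emb_val_ge p l h2]; omega
  · rw [emb_val_ge p i h1, emb_val_lt p l h2]; omega
  · rw [emb_val_ge p i h1, emb_val_ge p l h2]; omega

lemma ins_eq_last_iff (ρ : Fin (r * k) → Fin k) (p : Fin (r * k + 1)) (i : Fin (r * (k + 1))) :
    ins ρ p i = Fin.last k ↔ (p : ℕ) ≤ (i : ℕ) ∧ (i : ℕ) < (p : ℕ) + r := by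
  unfold ins
  split_ifs with h1 h2
  · exact iff_of_false (Fin.castSucc_lt_last _).ne (by omega)
  · exact iff_of_true rfl (by omega)
  · exact iff_of_false (Fin.castSucc_lt_last _).ne (by omega)

lemma off_block {ρ : Fin (r * k) → Fin k} {p : Fin (r * k + 1)} {b : Fin k}
    {j : Fin (r * (k + 1))} (hj : ins ρ p j = b.castSucc) :
    ¬ ((p : ℕ) ≤ (j : ℕ) ∧ (j : ℕ) < (p : ℕ) + r) :=
  fun hc => (Fin.castSucc_lt_last b).ne (hj.symm.trans ((ins_eq_last_iff ρ p j).mpr hc))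

lemma emb_inj (p : Fin (r * k + 1)) {i l : Fin (r * k)} (h : emb p i = emb p l) : i = l := by
  rcases lt_trichotomy i l with hlt | he | hlt
  · exact absurd h (emb_lt p hlt).ne
  · exact he
  · exact absurd h.symm (emb_lt p hlt).ne

/-- counting letter `b.castSucc` in the inserted word -/
lemma count_cast (ρ : Fin (r * k) → Fin k) (p : Fin (r * k + 1)) (b : Fin k) :
    (Finset.univ.filter (fun j => ins ρ p j = b.castSucc)).card
      = (Finset.univ.filter (fun i => ρ i = b)).card := by
  symm
  refine Finset.card_bij (fun i _ => emb p i) ?_ ?_ ?_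
  · intro i hi
    simp only [Finset.mem_filter, Finset.mem_univ, true_and] at hi ⊢
    rw [ins_emb, Fin.castSucc_inj]
    exact hi
  · intro i1 _ i2 _ h
    exact emb_inj p h
  · intro j hj
    simp only [Finset.mem_filter, Finset.mem_univ, true_and] at hj
    have hb := off_block hj
    have hjLt := j.isLt
    have hmul := @hrk r k
    have hple := p.isLt
    by_cases h1 : (j : ℕ) < (p : ℕ)
    · refine ⟨⟨(j : ℕ), by omega⟩, ?_, ?_⟩
      · simp only [Finset.mem_filter, Finset.mem_univ, true_and]
        unfold ins at hj
        rw [dif_pos h1] at hj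
        rw [Fin.castSucc_inj] at hj
        exact hj
      · apply Fin.ext
        rw [emb_val_lt p]
        exact h1
    · refine ⟨⟨(j : ℕ) - r, by omega⟩, ?_, ?_⟩
      · simp only [Finset.mem_filter, Finset.mem_univ, true_and]
        unfold ins at hj
        rw [dif_neg h1, dif_neg (by omega)] at hj
        rw [Fin.castSucc_inj] at hj
        exact hj
      · apply Fin.ext
        rw [emb_val_ge p]
        · show (j : ℕ) - r + r = (j : ℕ)
          omega
        · show ¬ ((j : ℕ) - r < (p : ℕ))
          omega

/-- counting the maximal letter in the inserted word -/
lemma count_last (ρ : Fin (r * k) → Fin k) (p : Fin (r * k + 1)) :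
    (Finset.univ.filter (fun j => ins ρ p j = Fin.last k)).card = r := by
  have : (Finset.univ.filter (fun j => ins ρ p j = Fin.last k)).card
      = (Finset.univ : Finset (Fin r)).card := by
    refine Finset.card_bij'
      (fun j hj => (⟨(j : ℕ) - (p : ℕ), by
        simp only [Finset.mem_filter, Finset.mem_univ, true_and, ins_eq_last_iff] at hj
        omega⟩ : Fin r))
      (fun m _ => (⟨(p : ℕ) + (m : ℕ), by
        have := p.isLt; have := m.isLt; have h := @hrk r k; omega⟩ : Fin (r * (k + 1))))
      ?_ ?_ ?_ ?_
    · intro j hj; exact Finset.mem_univ _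
    · intro m _
      simp only [Finset.mem_filter, Finset.mem_univ, true_and, ins_eq_last_iff]
      have := m.isLt
      constructor
      · show (p : ℕ) ≤ (p : ℕ) + (m : ℕ); omega
      · show (p : ℕ) + (m : ℕ) < (p : ℕ) + r; omega
    · intro j hj
      simp only [Finset.mem_filter, Finset.mem_univ, true_and, ins_eq_last_iff] at hj
      apply Fin.ext
      show (p : ℕ) + ((j : ℕ) - (p : ℕ)) = (j : ℕ)
      omega
    · intro m _
      apply Fin.ext
      show (p : ℕ) + (m : ℕ) - (p : ℕ) = (m : ℕ)
      omega
  rw [this, Finset.card_univ, Fintype.card_fin]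

/-- the Stirling property is preserved by insertion -/
lemma ins_stirling {ρ : Fin (r * k) → Fin k} (p : Fin (r * k + 1))
    (hρ : ∀ i l j : Fin (r * k), i < l → l < j → ρ i = ρ j → ρ i ≤ ρ l) :
    ∀ i l j : Fin (r * (k + 1)), i < l → l < j → ins ρ p i = ins ρ p j →
      ins ρ p i ≤ ins ρ p l := by
  intro i l j hil hlj heq
  rw [Fin.lt_def] at hil hlj
  by_cases hlast : ins ρ p l = Fin.last k
  · rw [hlast]; exact Fin.le_last _
  have hl : ¬ ((p : ℕ) ≤ (l : ℕ) ∧ (l : ℕ) < (p : ℕ) + r) := by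
    rw [← ins_eq_last_iff ρ p l]; exact hlast
  by_cases hilast : ins ρ p i = Fin.last k
  · have hj : ins ρ p j = Fin.last k := heq ▸ hilast
    rw [ins_eq_last_iff] at hilast hj
    omega
  · have hi : ¬ ((p : ℕ) ≤ (i : ℕ) ∧ (i : ℕ) < (p : ℕ) + r) := by
      rw [← ins_eq_last_iff ρ p i]; exact hilast
    have hjlast : ins ρ p j ≠ Fin.last k := heq ▸ hilast
    have hj : ¬ ((p : ℕ) ≤ (j : ℕ) ∧ (j : ℕ) < (p : ℕ) + r) := by
      rw [← ins_eq_last_iff ρ p j]; exact hjlast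
    unfold ins at heq ⊢
    split_ifs at heq ⊢ with h1 h2 h3 h4 h5 h6 <;>
      first
      | omega
      | (rw [Fin.castSucc_inj] at heq
         rw [Fin.castSucc_le_castSucc_iff]
         exact hρ _ _ _ (by rw [Fin.mk_lt_mk]; omega) (by rw [Fin.mk_lt_mk]; omega) heq)

/-- the Stirling property descends from the inserted word -/
lemma ins_stirling_rev {ρ : Fin (r * k) → Fin k} (p : Fin (r * k + 1))
    (hσ : ∀ i l j : Fin (r * (k + 1)), i < l → l < j → ins ρ p i = ins ρ p j →
      ins ρ p i ≤ ins ρ p l) :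
    ∀ i l j : Fin (r * k), i < l → l < j → ρ i = ρ j → ρ i ≤ ρ l := by
  intro i l j hil hlj heq
  have := hσ (emb p i) (emb p l) (emb p j) (emb_lt p hil) (emb_lt p hlj)
    (by rw [ins_emb, ins_emb, Fin.castSucc_inj]; exact heq)
  rw [ins_emb, ins_emb, Fin.castSucc_le_castSucc_iff] at this
  exact this

lemma ins_mem {ρ : Fin (r * k) → Fin k} (hρ : ρ ∈ stirlingSet r k) (p : Fin (r * k + 1)) :
    ins ρ p ∈ stirlingSet r (k + 1) := by
  rw [stirlingSet, Finset.mem_filter] at hρ ⊢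
  obtain ⟨-, hcount, hst⟩ := hρ
  refine ⟨Finset.mem_univ _, fun a => ?_, ins_stirling p hst⟩
  rcases Fin.eq_castSucc_or_eq_last a with ⟨b, rfl⟩ | rfl
  · rw [count_cast]; exact hcount b
  · exact count_last ρ p

lemma ins_inj {ρ ρ' : Fin (r * k) → Fin k} {p p' : Fin (r * k + 1)} (hr : 1 ≤ r)
    (h : ins ρ p = ins ρ' p') : ρ = ρ' ∧ p = p' := by
  have hle := p.isLt
  have hle' := p'.isLt
  have hmul := @hrk r k
  have hpp : (p : ℕ) = (p' : ℕ) := by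
    have h1 : ins ρ p ⟨p, by omega⟩ = Fin.last k := by
      rw [ins_eq_last_iff]
      exact ⟨Nat.le_refl _, by show (p : ℕ) < (p : ℕ) + r; omega⟩
    have h2 : ins ρ' p' ⟨p', by omega⟩ = Fin.last k := by
      rw [ins_eq_last_iff]
      exact ⟨Nat.le_refl _, by show (p' : ℕ) < (p' : ℕ) + r; omega⟩
    rw [h] at h1
    rw [← h] at h2
    rw [ins_eq_last_iff] at h1 h2
    have e1 : ((⟨(p : ℕ), by omega⟩ : Fin (r * (k + 1))) : ℕ) = (p : ℕ) := rfl
    have e2 : ((⟨(p' : ℕ), by omega⟩ : Fin (r * (k + 1))) : ℕ) = (p' : ℕ) := rfl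
    rw [e1] at h1
    rw [e2] at h2
    omega
  have hp : p = p' := Fin.ext hpp
  subst hp
  refine ⟨?_, rfl⟩
  funext i
  have := congrFun h (emb p i)
  rw [ins_emb, ins_emb, Fin.castSucc_inj] at this
  exact this

lemma ins_surj (hr : 1 ≤ r) {σ : Fin (r * (k + 1)) → Fin (k + 1)}
    (hσ : σ ∈ stirlingSet r (k + 1)) :
    ∃ ρ ∈ stirlingSet r k, ∃ p : Fin (r * k + 1), ins ρ p = σ := by
  rw [stirlingSet, Finset.mem_filter] at hσ
  obtain ⟨-, hcount, hst⟩ := hσ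
  set S : Finset (Fin (r * (k + 1))) := Finset.univ.filter (fun i => σ i = Fin.last k) with hS
  have hScard : S.card = r := hcount (Fin.last k)
  have hSne : S.Nonempty := by
    rw [← Finset.card_pos, hScard]; omega
  set a := S.min' hSne with ha
  set b := S.max' hSne with hb
  have haS : a ∈ S := S.min'_mem hSne
  have hbS : b ∈ S := S.max'_mem hSne
  have hSIcc : S = Finset.Icc a b := by
    ext i
    simp only [Finset.mem_Icc]
    constructor
    · intro hi; exact ⟨S.min'_le i hi, S.le_max' i hi⟩
    · rintro ⟨h1, h2⟩
      rcases eq_or_lt_of_le h1 with rfl | h1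
      · exact haS
      rcases eq_or_lt_of_le h2 with rfl | h2
      · exact hbS
      have hsa : σ a = Fin.last k := by simpa [hS] using haS
      have hsb : σ b = Fin.last k := by simpa [hS] using hbS
      have hle := hst a i b h1 h2 (hsa.trans hsb.symm)
      rw [hsa] at hle
      have : σ i = Fin.last k := le_antisymm (Fin.le_last _) hle
      simp [hS, this]
  have hcard : (b : ℕ) + 1 - (a : ℕ) = r := by
    rw [hSIcc, Fin.card_Icc] at hScard; exact hScard
  have hab : (a : ℕ) ≤ (b : ℕ) := S.min'_le b hbS
  have hblock : ∀ i : Fin (r * (k + 1)), σ i = Fin.last k ↔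
      (a : ℕ) ≤ (i : ℕ) ∧ (i : ℕ) < (a : ℕ) + r := by
    intro i
    have hmem : σ i = Fin.last k ↔ i ∈ S := by simp [hS]
    rw [hmem, hSIcc, Finset.mem_Icc, Fin.le_def, Fin.le_def]
    omega
  have hbisLt := b.isLt
  have hmul := @hrk r k
  have hpa : (a : ℕ) ≤ r * k := by omega
  set p : Fin (r * k + 1) := ⟨a, by omega⟩ with hp
  have hpv : (p : ℕ) = (a : ℕ) := rfl
  have hoff : ∀ i : Fin (r * k), ((emb p i : Fin (r * (k + 1))) : ℕ) < (a : ℕ) ∨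
      (a : ℕ) + r ≤ ((emb p i) : ℕ) := by
    intro i
    have := i.isLt
    by_cases h1 : (i : ℕ) < (p : ℕ)
    · rw [emb_val_lt p i h1]; omega
    · rw [emb_val_ge p i h1]; omega
  have hvlt : ∀ i : Fin (r * k), (σ (emb p i) : ℕ) < k := by
    intro i
    have hne : σ (emb p i) ≠ Fin.last k := by
      simp only [ne_eq, hblock]
      rcases hoff i with h | h <;> omega
    have hval := (σ (emb p i)).isLt
    rcases Nat.lt_or_ge ((σ (emb p i)) : ℕ) k with h | h
    · exact h
    · exact absurd (Fin.ext (show ((σ (emb p i)) : ℕ) = k by omega) :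
        σ (emb p i) = Fin.last k) hne
  set ρ : Fin (r * k) → Fin k := fun i => ⟨(σ (emb p i) : ℕ), hvlt i⟩ with hρ
  have hins : ins ρ p = σ := by
    funext i
    unfold ins
    split_ifs with h1 h2
    · have harg : emb p ⟨(i : ℕ), by have := p.isLt; omega⟩ = i := by
        apply Fin.ext
        rw [emb_val_lt p]
        exact h1
      apply Fin.ext
      show (σ (emb p ⟨(i : ℕ), by have := p.isLt; omega⟩) : ℕ) = (σ i : ℕ)
      exact congrArg (fun t => ((σ t : Fin (k+1)) : ℕ)) harg
    · symm
      rw [hblock]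
      omega
    · have hiLt := i.isLt
      have harg : emb p ⟨(i : ℕ) - r, by omega⟩ = i := by
        apply Fin.ext
        rw [emb_val_ge p]
        · show (i : ℕ) - r + r = (i : ℕ)
          omega
        · show ¬ ((i : ℕ) - r < (p : ℕ))
          omega
      apply Fin.ext
      show (σ (emb p ⟨(i : ℕ) - r, by omega⟩) : ℕ) = (σ i : ℕ)
      exact congrArg (fun t => ((σ t : Fin (k+1)) : ℕ)) harg
  refine ⟨ρ, ?_, p, hins⟩
  rw [stirlingSet, Finset.mem_filter]
  refine ⟨Finset.mem_univ _, fun c => ?_, ?_⟩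
  · rw [← count_cast ρ p c, hins]
    exact hcount c.castSucc
  · exact ins_stirling_rev p (by rw [hins]; exact hst)

lemma card_succ (hr : 1 ≤ r) :
    (stirlingSet r (k + 1)).card = (stirlingSet r k).card * (r * k + 1) := by
  have key : ((stirlingSet r k) ×ˢ (Finset.univ : Finset (Fin (r * k + 1)))).card
      = (stirlingSet r (k + 1)).card := by
    refine Finset.card_bij (fun a _ => ins a.1 a.2) ?_ ?_ ?_
    · intro a ha
      rw [Finset.mem_product] at ha
      exact ins_mem ha.1 a.2
    · intro a1 h1 a2 h2 h
      obtain ⟨h1, h2⟩ := ins_inj hr h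
      exact Prod.ext h1 h2
    · intro σ hσ
      obtain ⟨ρ, hρ, p, hins⟩ := ins_surj hr hσ
      exact ⟨(ρ, p), Finset.mem_product.mpr ⟨hρ, Finset.mem_univ _⟩, hins⟩
  rw [← key, Finset.card_product, Finset.card_univ, Fintype.card_fin]

lemma card_zero : (stirlingSet r 0).card = 1 := by
  rw [stirlingSet]
  rw [Finset.filter_true_of_mem]
  · rw [Finset.card_univ]
    simp [Fintype.card_fun]
  · intro ρ _
    refine ⟨fun a => a.elim0, fun i l j _ _ _ => ?_⟩
    have h := i.isLt
    simp only [Nat.mul_zero] at h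
    exact absurd h (Nat.not_lt_zero _)

lemma card_eq (hr : 1 ≤ r) (k : ℕ) :
    (stirlingSet r k).card = Finset.prod (Finset.Icc 1 (k - 1)) (fun j => r * j + 1) := by
  induction k with
  | zero => simpa using card_zero
  | succ m ih =>
    rw [card_succ hr, ih]
    cases m with
    | zero => simp
    | succ t =>
      rw [Nat.succ_sub_one, Nat.succ_sub_one]
      rw [Finset.prod_Icc_succ_top (by omega)]

end StAux

/-- the number of `r`-Stirling permutations of order `k` is `∏_{j=1}^{k-1} (rj+1)`. -/
theorem stmt0 (r k : ℕ) (hr : 2 ≤ r) (hk : 1 ≤ k) :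
    (stirlingSet r k).card = Finset.prod (Finset.Icc 1 (k - 1)) (fun j => r * j + 1) := by
  exact StAux.card_eq (by omega) k
end
end

section
/- For all integers r ≥ 2 and k ≥ 1, the number of permutations π in S_{rk+1} such that π^{-1} is a 2134⋯(r+1)-cluster equals ∏_{j=1}^{k-1} (rj + 1). -/
open scoped Classical

noncomputable section

/-- One-line notation (0-based positions and values) of a permutation of `Fin n`. -/
def ofPerm {n : ℕ} (π : Equiv.Perm (Fin n)) : ℕ → ℕ :=
  fun i => if h : i < n then (π ⟨i, h⟩ : ℕ) else 0

/-- Number of descents of a word of length `n`. -/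
def desNum (n : ℕ) (w : ℕ → ℕ) : ℕ :=
  ((Finset.range (n - 1)).filter (fun i => w (i + 1) < w i)).card

/-- Number of peaks of a word of length `n`. -/
def pkNum (n : ℕ) (w : ℕ → ℕ) : ℕ :=
  ((Finset.Ico 1 (n - 1)).filter (fun i => w (i - 1) < w i ∧ w (i + 1) < w i)).card

/-- Number of left peaks of a word of length `n`. -/
def lpkNum (n : ℕ) (w : ℕ → ℕ) : ℕ :=
  ((Finset.range (n - 1)).filter
    (fun i => (1 ≤ i ∧ w (i - 1) < w i ∧ w (i + 1) < w i) ∨ (i = 0 ∧ w 1 < w 0))).card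

/-- A word of length `r*k+1` is a `2134⋯(r+1)`-cluster: in each window of length `r+1`
starting at position `r*j` (`0 ≤ j ≤ k-1`), the second entry is smallest, the first entry
is second smallest, and the remaining entries increase. -/
def IsCluster (r k : ℕ) (w : ℕ → ℕ) : Prop :=
  ∀ j < k, w (r * j + 1) < w (r * j) ∧ w (r * j) < w (r * j + 2) ∧
    ∀ l, 2 ≤ l → l < r → w (r * j + l) < w (r * j + l + 1)

/-- Permutations of `S_{rk+1}` whose inverse is a `2134⋯(r+1)`-cluster. -/
def clusterSet (r k : ℕ) : Finset (Equiv.Perm (Fin (r * k + 1))) :=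
  Finset.univ.filter (fun π => IsCluster r k (ofPerm π⁻¹))

section ClusterProof

open Equiv Finset

-- basic ofPerm lemmas
lemma ofPerm_lt {n : ℕ} (σ : Perm (Fin n)) {i : ℕ} (h : i < n) :
    ofPerm σ i = (σ ⟨i, h⟩ : ℕ) := dif_pos h

lemma ofPerm_bound {n : ℕ} (σ : Perm (Fin n)) {i : ℕ} (h : i < n) :
    ofPerm σ i < n := by rw [ofPerm_lt σ h]; exact (σ ⟨i, h⟩).isLt

lemma ofPerm_inj {n : ℕ} (σ : Perm (Fin n)) {a b : ℕ} (ha : a < n) (hb : b < n)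
    (h : ofPerm σ a = ofPerm σ b) : a = b := by
  rw [ofPerm_lt σ ha, ofPerm_lt σ hb] at h
  have := σ.injective (Fin.ext h)
  exact congrArg Fin.val this

lemma ofPerm_surj {n : ℕ} (σ : Perm (Fin n)) {v : ℕ} (hv : v < n) :
    ∃ q, q < n ∧ ofPerm σ q = v := by
  refine ⟨σ.symm ⟨v, hv⟩, (σ.symm ⟨v, hv⟩).isLt, ?_⟩
  rw [ofPerm_lt σ (σ.symm ⟨v, hv⟩).isLt]
  simp


lemma exists_bigger {r k : ℕ} {w : ℕ → ℕ} (hr : 2 ≤ r) (hσ : IsCluster r k w)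
    {q : ℕ} (hq : q < r * k) :
    ∃ q2, q2 ≤ r * k ∧ w q < w q2 ∧
      ((q % r = 1 ∧ q2 + 1 = q) ∨ (2 ≤ q % r ∧ q2 = q + 1) ∨
       (q % r = 0 ∧ q2 = q + 2 ∧ ∃ j, j + 1 ≤ k ∧ q = r * j)) := by
  have hr0 : 0 < r := by omega
  set j := q / r with hj
  set l := q % r with hl
  have hdm : r * j + l = q := Nat.div_add_mod q r
  have hlr : l < r := Nat.mod_lt _ hr0
  have hjk : j < k := by
    by_contra hc
    have : r * k ≤ r * j := Nat.mul_le_mul_left r (by omega)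
    omega
  obtain ⟨h1, h2, h3⟩ := hσ j hjk
  have hjk1 : r * (j + 1) ≤ r * k := Nat.mul_le_mul_left r hjk
  have hmul : r * (j + 1) = r * j + r := by ring
  rcases Nat.lt_or_ge l 2 with hl2 | hl2
  · interval_cases l
    · -- l = 0 : q = r*j
      refine ⟨q + 2, by omega, ?_, Or.inr (Or.inr ⟨by omega, rfl, j, by omega, by omega⟩)⟩
      have : q = r * j := by omega
      rw [this]; simpa using h2
    · -- l = 1
      refine ⟨r * j, by omega, ?_, Or.inl ⟨by omega, by omega⟩⟩
      have : q = r * j + 1 := by omega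
      rw [this]; exact h1
  · refine ⟨q + 1, by omega, ?_, Or.inr (Or.inl ⟨by omega, rfl⟩)⟩
    have hq' : q = r * j + l := by omega
    have := h3 l hl2 hlr
    rw [hq']; convert this using 2 <;> omega

lemma cluster_top {r k : ℕ} (hr : 2 ≤ r) (hk : 1 ≤ k) (σ : Perm (Fin (r * k + 1)))
    (hσ : IsCluster r k (ofPerm σ)) :
    ∀ p, r * (k - 1) + 2 ≤ p → p < r * k + 1 → ofPerm σ p = p := by
  have hmul : r * (k - 1) + r = r * k := by
    have : r * (k - 1) + r = r * ((k - 1) + 1) := by ring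
    rw [this]; congr 1; omega
  suffices H : ∀ t, ∀ p, r * (k - 1) + 2 ≤ p → p + t = r * k → ofPerm σ p = p by
    intro p hp1 hp2
    exact H (r * k - p) p hp1 (by omega)
  intro t
  induction t using Nat.strong_induction_on with
  | _ t IH =>
    intro p hp1 hp2
    obtain ⟨q, hqn, hWq⟩ := ofPerm_surj σ (show p < r * k + 1 by omega)
    rcases Nat.lt_trichotomy q p with hlt | heq | hgt
    · -- q < p : use exists_bigger
      obtain ⟨q2, hq2n, hWlt, hshape⟩ := exists_bigger hr hσ (show q < r * k by omega)
      rw [hWq] at hWlt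
      -- ofPerm σ q2 > p, so it is a big value; apply IH to it
      have hWb : ofPerm σ q2 < r * k + 1 := ofPerm_bound σ (by omega)
      set v := ofPerm σ q2 with hv
      have hIH : ofPerm σ v = v := by
        refine IH (r * k - v) (by omega) v (by omega) (by omega)
      have hq2v : q2 = v := ofPerm_inj σ (by omega) (by omega) (by rw [hIH])
      -- now v = q2 ≥ p + 1
      rcases hshape with ⟨_, h⟩ | ⟨_, h⟩ | ⟨_, h, j, hjk, hqj⟩
      · omega
      · omega
      · have : r * j ≤ r * (k - 1) := Nat.mul_le_mul_left r (by omega)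
        omega
    · rw [← heq] at hWq ⊢; rw [hWq, heq]
    · -- q > p : IH at q gives ofPerm σ q = q ≠ p
      have : ofPerm σ q = q := IH (r * k - q) (by omega) q (by omega) (by omega)
      omega

lemma cluster_big {r k : ℕ} (hr : 2 ≤ r) (hk : 1 ≤ k) (σ : Perm (Fin (r * k + 1)))
    (hσ : IsCluster r k (ofPerm σ)) :
    ∀ p, p ≤ r * (k - 1) + 1 → ofPerm σ p ≤ r * (k - 1) + 1 := by
  have hmul : r * (k - 1) + r = r * k := by
    have : r * (k - 1) + r = r * ((k - 1) + 1) := by ring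
    rw [this]; congr 1; omega
  intro p hp
  by_contra hc
  have hb : ofPerm σ p < r * k + 1 := ofPerm_bound σ (by omega)
  have h2 := cluster_top hr hk σ hσ (ofPerm σ p) (by omega) (by omega)
  have := ofPerm_inj σ (show p < r * k + 1 by omega) (by omega) h2.symm
  omega

lemma cluster_last {r k : ℕ} (hr : 2 ≤ r) (hk : 1 ≤ k) (σ : Perm (Fin (r * k + 1)))
    (hσ : IsCluster r k (ofPerm σ)) :
    ofPerm σ (r * (k - 1)) = r * (k - 1) + 1 := by
  have hmul : r * (k - 1) + r = r * k := by
    have : r * (k - 1) + r = r * ((k - 1) + 1) := by ring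
    rw [this]; congr 1; omega
  set m := r * (k - 1) + 1 with hm
  obtain ⟨q, hqn, hWq⟩ := ofPerm_surj σ (show m < r * k + 1 by omega)
  by_cases hq : q = r * (k - 1)
  · rw [hq] at hWq; exact hWq
  · exfalso
    -- q cannot be ≥ m + 1 by cluster_top
    have hqle : q ≤ m := by
      by_contra hc
      have := cluster_top hr hk σ hσ q (by omega) (by omega)
      omega
    obtain ⟨q2, hq2n, hWlt, hshape⟩ := exists_bigger hr hσ (show q < r * k by omega)
    rw [hWq] at hWlt
    have hmodm : m % r = 1 := by
      rw [hm, Nat.mul_add_mod]; exact Nat.mod_eq_of_lt (by omega)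
    rcases hshape with ⟨_, h⟩ | ⟨hmod, h⟩ | ⟨hmod, h, j, hjk, hqj⟩
    · -- q2 = q - 1 ≤ m
      have := cluster_big hr hk σ hσ q2 (by omega)
      omega
    · -- q2 = q + 1; q ≠ m since q % r ≥ 2
      have hqm : q ≠ m := by intro hc; rw [hc] at hmod; omega
      have := cluster_big hr hk σ hσ q2 (by omega)
      omega
    · -- q = r*j, j ≤ k-1, j ≠ k-1
      have hjne : j ≠ k - 1 := by intro hc; rw [hc] at hqj; omega
      have : r * (j + 1) ≤ r * (k - 1) := Nat.mul_le_mul_left r (by omega)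
      have hq2m : q2 ≤ m := by
        have : r * (j + 1) = r * j + r := by ring
        omega
      have := cluster_big hr hk σ hσ q2 (by omega)
      omega

lemma cluster_dip {r k : ℕ} (hr : 2 ≤ r) (hk : 1 ≤ k) (σ : Perm (Fin (r * k + 1)))
    (hσ : IsCluster r k (ofPerm σ)) :
    ofPerm σ (r * (k - 1) + 1) < r * (k - 1) + 1 := by
  have h := (hσ (k - 1) (by omega)).1
  rw [cluster_last hr hk σ hσ] at h
  exact h

/-- insert a gap at value `d` -/
def liftVal (d v : ℕ) : ℕ := if v < d then v else v + 1
/-- remove the value `d` -/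
def stdVal (d v : ℕ) : ℕ := if v < d then v else v - 1

lemma liftVal_le (d v : ℕ) : liftVal d v ≤ v + 1 := by unfold liftVal; split <;> omega
lemma liftVal_lt_liftVal {d a b : ℕ} (h : a < b) : liftVal d a < liftVal d b := by
  unfold liftVal; split_ifs <;> omega
lemma liftVal_ne (d v : ℕ) : liftVal d v ≠ d := by unfold liftVal; split <;> omega
lemma stdVal_liftVal (d v : ℕ) : stdVal d (liftVal d v) = v := by
  unfold liftVal stdVal; split_ifs <;> omega
lemma liftVal_stdVal {d v : ℕ} (h : v ≠ d) : liftVal d (stdVal d v) = v := by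
  unfold liftVal stdVal; split_ifs <;> omega
lemma stdVal_lt_stdVal {d a b : ℕ} (h : a < b) (ha : a ≠ d) (hb : b ≠ d) :
    stdVal d a < stdVal d b := by
  unfold stdVal; split_ifs <;> omega

lemma liftVal_of_ge {d v : ℕ} (h : d ≤ v) : liftVal d v = v + 1 := by
  unfold liftVal; split <;> omega
lemma stdVal_bound {d v m : ℕ} (hd : d < m) (hv : v ≤ m) (hne : v ≠ d) : stdVal d v < m := by
  unfold stdVal; split_ifs <;> omega

/-- the `up` map on values -/
def upFun (r k : ℕ) (σ' : Perm (Fin (r * k + 1))) (d : Fin (r * k + 1)) (p : ℕ) : ℕ :=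
  if p < r * k + 1 then liftVal d (ofPerm σ' p) else if p = r * k + 1 then d else p

lemma upFun_eval_low {r k : ℕ} (σ' : Perm (Fin (r * k + 1))) (d : Fin (r * k + 1)) {p : ℕ}
    (hp : p < r * k + 1) : upFun r k σ' d p = liftVal d (ofPerm σ' p) := by
  unfold upFun; rw [if_pos hp]

lemma upFun_eval_mid {r k : ℕ} (σ' : Perm (Fin (r * k + 1))) (d : Fin (r * k + 1)) :
    upFun r k σ' d (r * k + 1) = d := by
  unfold upFun; rw [if_neg (by omega), if_pos rfl]

lemma upFun_eval_high {r k : ℕ} (σ' : Perm (Fin (r * k + 1))) (d : Fin (r * k + 1)) {p : ℕ}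
    (hp : r * k + 1 < p) : upFun r k σ' d p = p := by
  unfold upFun; rw [if_neg (by omega), if_neg (by omega)]

lemma upFun_low_bound {r k : ℕ} (σ' : Perm (Fin (r * k + 1))) (d : Fin (r * k + 1)) {p : ℕ}
    (hp : p < r * k + 1) : upFun r k σ' d p ≤ r * k + 1 := by
  rw [upFun_eval_low σ' d hp]
  have h1 := liftVal_le (d : ℕ) (ofPerm σ' p)
  have h2 := ofPerm_bound σ' hp
  omega

lemma upFun_bound {r k : ℕ} (hr : 2 ≤ r) (σ' : Perm (Fin (r * k + 1))) (d : Fin (r * k + 1))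
    {p : ℕ} (hp : p < r * (k + 1) + 1) : upFun r k σ' d p < r * (k + 1) + 1 := by
  have hmul : r * (k + 1) = r * k + r := by ring
  rcases Nat.lt_trichotomy p (r * k + 1) with h | h | h
  · have := upFun_low_bound σ' d h; omega
  · rw [h, upFun_eval_mid]; have := d.isLt; omega
  · rw [upFun_eval_high σ' d h]; omega

lemma upFun_inj {r k : ℕ} (σ' : Perm (Fin (r * k + 1))) (d : Fin (r * k + 1)) {p q : ℕ}
    (hp : p < r * (k + 1) + 1) (hq : q < r * (k + 1) + 1)
    (h : upFun r k σ' d p = upFun r k σ' d q) : p = q := by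
  have hd := d.isLt
  rcases Nat.lt_trichotomy p (r * k + 1) with h1 | h1 | h1 <;>
    rcases Nat.lt_trichotomy q (r * k + 1) with h2 | h2 | h2
  · rw [upFun_eval_low σ' d h1, upFun_eval_low σ' d h2] at h
    have := congrArg (stdVal (d : ℕ)) h
    rw [stdVal_liftVal, stdVal_liftVal] at this
    exact ofPerm_inj σ' h1 h2 this
  · rw [upFun_eval_low σ' d h1, h2, upFun_eval_mid] at h
    exact absurd h (liftVal_ne _ _)
  · rw [upFun_eval_low σ' d h1, upFun_eval_high σ' d h2] at h
    have := upFun_low_bound σ' d h1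
    rw [upFun_eval_low σ' d h1] at this; omega
  · rw [h1, upFun_eval_mid, upFun_eval_low σ' d h2] at h
    exact absurd h.symm (liftVal_ne _ _)
  · omega
  · rw [h1, upFun_eval_mid, upFun_eval_high σ' d h2] at h; omega
  · rw [upFun_eval_high σ' d h1, upFun_eval_low σ' d h2] at h
    have := upFun_low_bound σ' d h2
    rw [upFun_eval_low σ' d h2] at this; omega
  · rw [upFun_eval_high σ' d h1, h2, upFun_eval_mid] at h; omega
  · rw [upFun_eval_high σ' d h1, upFun_eval_high σ' d h2] at h; exact h

/-- the `up` permutation -/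
def upPerm (r k : ℕ) (hr : 2 ≤ r) (σ' : Perm (Fin (r * k + 1))) (d : Fin (r * k + 1)) :
    Perm (Fin (r * (k + 1) + 1)) :=
  Equiv.ofBijective (fun p => ⟨upFun r k σ' d p.val, upFun_bound hr σ' d p.isLt⟩)
    (Finite.injective_iff_bijective.mp
      (fun a b h => Fin.ext (upFun_inj σ' d a.isLt b.isLt (congrArg Fin.val h))))

lemma upPerm_val {r k : ℕ} (hr : 2 ≤ r) (σ' : Perm (Fin (r * k + 1))) (d : Fin (r * k + 1))
    {x : ℕ} (hx : x < r * (k + 1) + 1) :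
    ofPerm (upPerm r k hr σ' d) x = upFun r k σ' d x := by
  rw [ofPerm_lt _ hx]; rfl

lemma upPerm_low {r k : ℕ} (hr : 2 ≤ r) (σ' : Perm (Fin (r * k + 1))) (d : Fin (r * k + 1))
    {x : ℕ} (hx : x < r * k + 1) :
    ofPerm (upPerm r k hr σ' d) x = liftVal d (ofPerm σ' x) := by
  have hmul : r * (k + 1) = r * k + r := by ring
  rw [upPerm_val hr σ' d (by omega), upFun_eval_low σ' d hx]

lemma upPerm_mid {r k : ℕ} (hr : 2 ≤ r) (σ' : Perm (Fin (r * k + 1))) (d : Fin (r * k + 1)) :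
    ofPerm (upPerm r k hr σ' d) (r * k + 1) = d := by
  have hmul : r * (k + 1) = r * k + r := by ring
  rw [upPerm_val hr σ' d (by omega), upFun_eval_mid]

lemma upPerm_high {r k : ℕ} (hr : 2 ≤ r) (σ' : Perm (Fin (r * k + 1))) (d : Fin (r * k + 1))
    {x : ℕ} (hx1 : r * k + 1 < x) (hx2 : x < r * (k + 1) + 1) :
    ofPerm (upPerm r k hr σ' d) x = x := by
  rw [upPerm_val hr σ' d hx2, upFun_eval_high σ' d hx1]

-- ############ new material #############

lemma ofPerm_fin {n : ℕ} (τ : Perm (Fin n)) (p : Fin n) :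
    ofPerm τ (p : ℕ) = (τ p : ℕ) := by
  rw [ofPerm_lt τ p.isLt]

lemma dip_bound {r k : ℕ} (hr : 2 ≤ r) (σ : Perm (Fin (r * (k + 1) + 1)))
    (hσ : IsCluster r (k + 1) (ofPerm σ)) : ofPerm σ (r * k + 1) < r * k + 1 :=
  cluster_dip hr (by omega) σ hσ

lemma big' {r k : ℕ} (hr : 2 ≤ r) (σ : Perm (Fin (r * (k + 1) + 1)))
    (hσ : IsCluster r (k + 1) (ofPerm σ)) :
    ∀ p, p ≤ r * k + 1 → ofPerm σ p ≤ r * k + 1 :=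
  cluster_big hr (by omega) σ hσ

lemma top' {r k : ℕ} (hr : 2 ≤ r) (σ : Perm (Fin (r * (k + 1) + 1)))
    (hσ : IsCluster r (k + 1) (ofPerm σ)) :
    ∀ p, r * k + 2 ≤ p → p < r * (k + 1) + 1 → ofPerm σ p = p :=
  cluster_top hr (by omega) σ hσ

lemma val_ne_dip {r k : ℕ} (hr : 2 ≤ r) (σ : Perm (Fin (r * (k + 1) + 1)))
    (hσ : IsCluster r (k + 1) (ofPerm σ)) {x : ℕ} (hx : x < r * k + 1) :
    ofPerm σ x ≠ ofPerm σ (r * k + 1) := by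
  have hmul : r * (k + 1) = r * k + r := by ring
  intro h
  have := ofPerm_inj σ (show x < r * (k + 1) + 1 by omega) (by omega) h
  omega

/-- the `down` map on values -/
def downFun (r k : ℕ) (σ : Perm (Fin (r * (k + 1) + 1))) (p : ℕ) : ℕ :=
  stdVal (ofPerm σ (r * k + 1)) (ofPerm σ p)

lemma downFun_bound {r k : ℕ} (hr : 2 ≤ r) (σ : Perm (Fin (r * (k + 1) + 1)))
    (hσ : IsCluster r (k + 1) (ofPerm σ)) {p : ℕ} (hp : p < r * k + 1) :
    downFun r k σ p < r * k + 1 := by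
  have hd := dip_bound hr σ hσ
  have hv := big' hr σ hσ p (by omega)
  have hne := val_ne_dip hr σ hσ hp
  exact stdVal_bound hd hv hne

lemma downFun_inj {r k : ℕ} (hr : 2 ≤ r) (σ : Perm (Fin (r * (k + 1) + 1)))
    (hσ : IsCluster r (k + 1) (ofPerm σ)) {p q : ℕ} (hp : p < r * k + 1) (hq : q < r * k + 1)
    (h : downFun r k σ p = downFun r k σ q) : p = q := by
  have hmul : r * (k + 1) = r * k + r := by ring
  unfold downFun at h
  have h2 : ofPerm σ p = ofPerm σ q := by
    rw [← liftVal_stdVal (val_ne_dip hr σ hσ hp), ← liftVal_stdVal (val_ne_dip hr σ hσ hq), h]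
  exact ofPerm_inj σ (by omega) (by omega) h2

/-- the `down` permutation -/
def downPerm (r k : ℕ) (hr : 2 ≤ r) (σ : Perm (Fin (r * (k + 1) + 1)))
    (hσ : IsCluster r (k + 1) (ofPerm σ)) : Perm (Fin (r * k + 1)) :=
  Equiv.ofBijective (fun p => ⟨downFun r k σ p.val, downFun_bound hr σ hσ p.isLt⟩)
    (Finite.injective_iff_bijective.mp
      (fun a b h => Fin.ext (downFun_inj hr σ hσ a.isLt b.isLt (congrArg Fin.val h))))

lemma downPerm_val {r k : ℕ} (hr : 2 ≤ r) (σ : Perm (Fin (r * (k + 1) + 1)))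
    (hσ : IsCluster r (k + 1) (ofPerm σ)) {x : ℕ} (hx : x < r * k + 1) :
    ofPerm (downPerm r k hr σ hσ) x = stdVal (ofPerm σ (r * k + 1)) (ofPerm σ x) := by
  rw [ofPerm_lt _ hx]; rfl

lemma upPerm_isCluster {r k : ℕ} (hr : 2 ≤ r) (hk : 1 ≤ k) (σ' : Perm (Fin (r * k + 1)))
    (hσ' : IsCluster r k (ofPerm σ')) (d : Fin (r * k + 1)) :
    IsCluster r (k + 1) (ofPerm (upPerm r k hr σ' d)) := by
  have hmul : r * (k + 1) = r * k + r := by ring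
  intro j hj
  by_cases hjk : j < k
  · have hwin : r * j + r ≤ r * k := by
      have h1 : r * (j + 1) ≤ r * k := Nat.mul_le_mul_left r (by omega)
      have h2 : r * (j + 1) = r * j + r := by ring
      omega
    obtain ⟨h1, h2, h3⟩ := hσ' j hjk
    refine ⟨?_, ?_, ?_⟩
    · rw [upPerm_low hr σ' d (by omega), upPerm_low hr σ' d (by omega)]
      exact liftVal_lt_liftVal h1
    · rw [upPerm_low hr σ' d (by omega), upPerm_low hr σ' d (by omega)]
      exact liftVal_lt_liftVal h2
    · intro l hl2 hlr
      rw [upPerm_low hr σ' d (by omega), upPerm_low hr σ' d (by omega)]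
      exact liftVal_lt_liftVal (h3 l hl2 hlr)
  · rw [show j = k from by omega]
    have hmul2 : r * (k - 1) + r = r * k := by
      have : r * (k - 1) + r = r * ((k - 1) + 1) := by ring
      rw [this]; congr 1; omega
    have hlast : ofPerm σ' (r * k) = r * k :=
      cluster_top hr hk σ' hσ' (r * k) (by omega) (by omega)
    have hd := d.isLt
    refine ⟨?_, ?_, ?_⟩
    · rw [upPerm_mid, upPerm_low hr σ' d (by omega), hlast,
        liftVal_of_ge (show (d : ℕ) ≤ r * k by omega)]
      omega
    · rw [upPerm_low hr σ' d (by omega), hlast,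
        upPerm_high hr σ' d (by omega) (by omega),
        liftVal_of_ge (show (d : ℕ) ≤ r * k by omega)]
      omega
    · intro l hl2 hlr
      rw [upPerm_high hr σ' d (by omega) (by omega),
        upPerm_high hr σ' d (by omega) (by omega)]
      omega

lemma downPerm_isCluster {r k : ℕ} (hr : 2 ≤ r) (σ : Perm (Fin (r * (k + 1) + 1)))
    (hσ : IsCluster r (k + 1) (ofPerm σ)) :
    IsCluster r k (ofPerm (downPerm r k hr σ hσ)) := by
  intro j hj
  have hwin : r * j + r ≤ r * k := by
    have h1 : r * (j + 1) ≤ r * k := Nat.mul_le_mul_left r (by omega)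
    have h2 : r * (j + 1) = r * j + r := by ring
    omega
  obtain ⟨h1, h2, h3⟩ := hσ j (by omega)
  refine ⟨?_, ?_, ?_⟩
  · rw [downPerm_val hr σ hσ (by omega), downPerm_val hr σ hσ (by omega)]
    exact stdVal_lt_stdVal h1 (val_ne_dip hr σ hσ (by omega)) (val_ne_dip hr σ hσ (by omega))
  · rw [downPerm_val hr σ hσ (by omega), downPerm_val hr σ hσ (by omega)]
    exact stdVal_lt_stdVal h2 (val_ne_dip hr σ hσ (by omega)) (val_ne_dip hr σ hσ (by omega))
  · intro l hl2 hlr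
    rw [downPerm_val hr σ hσ (by omega), downPerm_val hr σ hσ (by omega)]
    exact stdVal_lt_stdVal (h3 l hl2 hlr) (val_ne_dip hr σ hσ (by omega))
      (val_ne_dip hr σ hσ (by omega))

lemma down_up {r k : ℕ} (hr : 2 ≤ r) (σ' : Perm (Fin (r * k + 1))) (d : Fin (r * k + 1))
    (h : IsCluster r (k + 1) (ofPerm (upPerm r k hr σ' d))) :
    downPerm r k hr (upPerm r k hr σ' d) h = σ' := by
  apply Equiv.ext
  intro p
  apply Fin.ext
  have e1 : ((downPerm r k hr (upPerm r k hr σ' d) h) p : ℕ)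
      = ofPerm (downPerm r k hr (upPerm r k hr σ' d) h) (p : ℕ) := (ofPerm_fin _ p).symm
  rw [e1, downPerm_val hr _ h p.isLt, upPerm_mid, upPerm_low hr σ' d p.isLt,
    stdVal_liftVal, ofPerm_fin]

lemma up_down {r k : ℕ} (hr : 2 ≤ r) (σ : Perm (Fin (r * (k + 1) + 1)))
    (hσ : IsCluster r (k + 1) (ofPerm σ)) :
    upPerm r k hr (downPerm r k hr σ hσ) ⟨ofPerm σ (r * k + 1), dip_bound hr σ hσ⟩ = σ := by
  have hmul : r * (k + 1) = r * k + r := by ring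
  apply Equiv.ext
  intro p
  apply Fin.ext
  have e1 : ((upPerm r k hr (downPerm r k hr σ hσ) ⟨ofPerm σ (r * k + 1), dip_bound hr σ hσ⟩) p : ℕ)
      = ofPerm (upPerm r k hr (downPerm r k hr σ hσ) ⟨ofPerm σ (r * k + 1), dip_bound hr σ hσ⟩)
          (p : ℕ) := (ofPerm_fin _ p).symm
  rw [e1, ← ofPerm_fin σ p]
  rcases Nat.lt_trichotomy (p : ℕ) (r * k + 1) with hp | hp | hp
  · rw [upPerm_low hr _ _ hp, downPerm_val hr σ hσ hp]
    exact liftVal_stdVal (val_ne_dip hr σ hσ hp)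
  · rw [hp, upPerm_mid]
  · rw [upPerm_high hr _ _ hp p.isLt]
    exact (top' hr σ hσ (p : ℕ) (by omega) p.isLt).symm

def clusterFilter (r k : ℕ) : Finset (Perm (Fin (r * k + 1))) :=
  univ.filter (fun σ => IsCluster r k (ofPerm σ))

lemma mem_clusterFilter {r k : ℕ} {σ : Perm (Fin (r * k + 1))} :
    σ ∈ clusterFilter r k ↔ IsCluster r k (ofPerm σ) := by
  simp [clusterFilter]

lemma step {r k : ℕ} (hr : 2 ≤ r) (hk : 1 ≤ k) :
    (clusterFilter r (k + 1)).card = (r * k + 1) * (clusterFilter r k).card := by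
  have key : (clusterFilter r (k + 1)).card
      = ((clusterFilter r k) ×ˢ (univ : Finset (Fin (r * k + 1)))).card := by
    refine Finset.card_bij'
      (fun σ hσ => (downPerm r k hr σ (mem_clusterFilter.mp hσ),
        ⟨ofPerm σ (r * k + 1), dip_bound hr σ (mem_clusterFilter.mp hσ)⟩))
      (fun b _ => upPerm r k hr b.1 b.2) ?_ ?_ ?_ ?_
    · intro a ha
      rw [Finset.mem_product]
      exact ⟨mem_clusterFilter.mpr (downPerm_isCluster hr a (mem_clusterFilter.mp ha)),
        Finset.mem_univ _⟩
    · intro b hb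
      exact mem_clusterFilter.mpr (upPerm_isCluster hr hk b.1
        (mem_clusterFilter.mp (Finset.mem_product.mp hb).1) b.2)
    · intro a ha
      exact up_down hr a (mem_clusterFilter.mp ha)
    · intro b hb
      have h1 := down_up hr b.1 b.2 (mem_clusterFilter.mp (mem_clusterFilter.mpr
        (upPerm_isCluster hr hk b.1 (mem_clusterFilter.mp (Finset.mem_product.mp hb).1) b.2)))
      refine Prod.ext ?_ ?_
      · exact h1
      · apply Fin.ext
        simp only
        rw [upPerm_mid]
  rw [key, Finset.card_product, Finset.card_univ, Fintype.card_fin, Nat.mul_comm]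

lemma base {r : ℕ} (hr : 2 ≤ r) : (clusterFilter r 1).card = 1 := by
  rw [Finset.card_eq_one]
  refine ⟨Equiv.swap ⟨0, by omega⟩ ⟨1, by omega⟩, ?_⟩
  have hval : ∀ x (hx : x < r * 1 + 1),
      ofPerm (Equiv.swap (⟨0, by omega⟩ : Fin (r * 1 + 1)) ⟨1, by omega⟩) x
        = if x = 0 then 1 else if x = 1 then 0 else x := by
    intro x hx
    rw [ofPerm_lt _ hx, Equiv.swap_apply_def]
    split_ifs with hA hB h0 h1 h1' <;>
      simp_all [Fin.ext_iff] <;> omega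
  have haux : ∀ (σ : Perm (Fin (r * 1 + 1))), IsCluster r 1 (ofPerm σ) →
      ∀ x, x < r * 1 + 1 → ofPerm σ x = if x = 0 then 1 else if x = 1 then 0 else x := by
    intro σ hσ x hx
    have h1 : ofPerm σ 0 = 1 := cluster_last hr le_rfl σ hσ
    have h2 : ofPerm σ 1 = 0 := by
      have hdip : ofPerm σ 1 < 1 := cluster_dip hr le_rfl σ hσ
      omega
    rcases Nat.lt_trichotomy x 1 with hp | hp | hp
    · have hx0 : x = 0 := by omega
      subst hx0
      rw [if_pos rfl]; exact h1
    · subst hp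
      rw [if_neg (by omega), if_pos rfl]; exact h2
    · rw [if_neg (by omega), if_neg (by omega)]
      exact cluster_top hr le_rfl σ hσ x (by omega) hx
  ext σ
  simp only [Finset.mem_singleton, mem_clusterFilter]
  constructor
  · intro hσ
    apply Equiv.ext
    intro p
    apply Fin.ext
    rw [← ofPerm_fin σ p, ← ofPerm_fin _ p, hval _ p.isLt, haux σ hσ _ p.isLt]
  · intro hσ
    subst hσ
    intro j hj
    have hj0 : j = 0 := by omega
    subst hj0
    refine ⟨?_, ?_, ?_⟩
    · rw [hval (r * 0 + 1) (by omega), hval (r * 0) (by omega)]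
      split_ifs <;> simp_all <;> try omega
    · rw [hval (r * 0) (by omega), hval (r * 0 + 2) (by omega)]
      split_ifs <;> simp_all <;> try omega
    · intro l hl2 hlr
      rw [hval (r * 0 + l) (by omega), hval (r * 0 + l + 1) (by omega)]
      split_ifs <;> simp_all <;> try omega

lemma card_clusterSet (r k : ℕ) : (clusterSet r k).card = (clusterFilter r k).card := by
  refine Finset.card_bij' (fun π _ => π⁻¹) (fun σ _ => σ⁻¹) ?_ ?_ ?_ ?_
  · intro a ha
    rw [mem_clusterFilter]
    exact (Finset.mem_filter.mp ha).2
  · intro b hb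
    rw [clusterSet, Finset.mem_filter]
    exact ⟨Finset.mem_univ _, by rw [inv_inv]; exact mem_clusterFilter.mp hb⟩
  · intro a _; exact inv_inv a
  · intro b _; exact inv_inv b

/-- the number of `π ∈ S_{rk+1}` with `π⁻¹` a `2134⋯(r+1)`-cluster is
`∏_{j=1}^{k-1} (rj+1)`. -/
theorem stmt1 (r k : ℕ) (hr : 2 ≤ r) (hk : 1 ≤ k) :
    (clusterSet r k).card = Finset.prod (Finset.Icc 1 (k - 1)) (fun j => r * j + 1) := by
  rw [card_clusterSet]
  induction k, hk using Nat.le_induction with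
  | base =>
    rw [base hr]
    norm_num
  | succ k hk IH =>
    rw [step hr hk, IH]
    rw [show k + 1 - 1 = k from rfl]
    rw [show k = (k - 1) + 1 from by omega]
    rw [Finset.prod_Icc_succ_top (by omega)]
    rw [show (k - 1) + 1 = k from by omega]
    ring

end ClusterProof
end
end

section
/- Let r ≥ 2, k ≥ 1, and π ∈ S_{rk+1}. Then π^{-1} is a 2134⋯(r+1)-cluster if and only if both: (i) the letters of π not congruent to 2 modulo r form an increasing subsequence of π, and (ii) for each i with 0 ≤ i ≤ k-1, the letter ri+2 appears before the letter ri+1 in π. -/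
open scoped Classical

noncomputable section

lemma ofPerm_lt_s2 {n : ℕ} (π : Equiv.Perm (Fin n)) {p : ℕ} (hp : p < n) :
    ofPerm π p < n := by
  simpa [ofPerm, hp] using (π ⟨p, hp⟩).isLt

lemma ofPerm_inv_ofPerm {n : ℕ} (π : Equiv.Perm (Fin n)) {p : ℕ} (hp : p < n) :
    ofPerm π⁻¹ (ofPerm π p) = p := by
  simp only [ofPerm, dif_pos hp]
  have h1 : ((π ⟨p, hp⟩ : Fin n) : ℕ) < n := (π ⟨p, hp⟩).isLt
  rw [dif_pos h1]
  simp

lemma ofPerm_ofPerm_inv {n : ℕ} (π : Equiv.Perm (Fin n)) {v : ℕ} (hv : v < n) :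
    ofPerm π (ofPerm π⁻¹ v) = v := by
  simpa using ofPerm_inv_ofPerm π⁻¹ hv

lemma mod_succ_iff {r v : ℕ} (hr : 2 ≤ r) : (v + 1) % r = 2 % r ↔ v % r = 1 := by
  have h1r : (1 : ℕ) % r = 1 := Nat.mod_eq_of_lt (by omega)
  constructor
  · intro h
    have h2 : v + 1 ≡ 1 + 1 [MOD r] := by simpa [Nat.ModEq] using h
    have h3 : v ≡ 1 [MOD r] := Nat.ModEq.add_right_cancel' 1 h2
    calc v % r = 1 % r := h3
      _ = 1 := h1r
  · intro h
    have h3 : v ≡ 1 [MOD r] := by unfold Nat.ModEq; rw [h, h1r]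
    exact h3.add_right 1

/-- characterization of inverse `2134⋯(r+1)`-clusters.  Letters are 1-based,
so the letter at (0-based) position `p` of `π` is `ofPerm π p + 1`. -/
theorem stmt2 (r k : ℕ) (hr : 2 ≤ r) (hk : 1 ≤ k) (π : Equiv.Perm (Fin (r * k + 1))) :
    IsCluster r k (ofPerm π⁻¹) ↔
      ((∀ p q, p < q → q < r * k + 1 →
          (ofPerm π p + 1) % r ≠ 2 % r → (ofPerm π q + 1) % r ≠ 2 % r →
          ofPerm π p < ofPerm π q) ∧
       (∀ i < k, ∀ p q, p < r * k + 1 → q < r * k + 1 →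
          ofPerm π p + 1 = r * i + 2 → ofPerm π q + 1 = r * i + 1 → p < q)) := by
  have hrpos : 0 < r := by omega
  have h1r : (1 : ℕ) % r = 1 := Nat.mod_eq_of_lt (by omega)
  have haddm : ∀ a : ℕ, (a + 1) % r = (a % r + 1) % r := by
    intro a; conv_lhs => rw [Nat.add_mod, h1r]
  have h2r : 2 % r ≠ 1 := by
    rcases Nat.lt_or_ge 2 r with h | h
    · rw [Nat.mod_eq_of_lt h]; omega
    · have hre : r = 2 := by omega
      rw [hre]; omega
  have jlt : ∀ j, r * j < r * k → j < k := fun j h => Nat.lt_of_mul_lt_mul_left h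
  constructor
  · intro hc
    have hstep1 : ∀ a, a % r ≠ 1 → (a + 1) % r ≠ 1 → a + 1 < r * k + 1 →
        ofPerm π⁻¹ a < ofPerm π⁻¹ (a + 1) := by
      intro a ha ha1 hlt
      have hld : r * (a / r) + a % r = a := Nat.div_add_mod a r
      have hlr : a % r < r := Nat.mod_lt a hrpos
      have hl2 : 2 ≤ a % r := by
        rcases Nat.lt_or_ge (a % r) 2 with h | h
        · exfalso
          have h0 : a % r = 0 := by omega
          apply ha1
          rw [haddm, h0]
          exact h1r
        · exact h
      have hj : a / r < k := by
        apply jlt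
        have : r * (a / r) + 2 ≤ r * k := by omega
        omega
      obtain ⟨_, _, h3⟩ := hc (a / r) hj
      have := h3 (a % r) hl2 hlr
      rwa [hld] at this
    have hstep2 : ∀ a, a % r = 0 → a + 2 < r * k + 1 →
        ofPerm π⁻¹ a < ofPerm π⁻¹ (a + 2) := by
      intro a ha hlt
      have hld : r * (a / r) + a % r = a := Nat.div_add_mod a r
      rw [ha, Nat.add_zero] at hld
      have hj : a / r < k := by
        apply jlt
        omega
      obtain ⟨_, h2, _⟩ := hc (a / r) hj
      rwa [hld] at h2
    have key : ∀ d, ∀ a, 1 ≤ d → a % r ≠ 1 → (a + d) % r ≠ 1 → a + d < r * k + 1 →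
        ofPerm π⁻¹ a < ofPerm π⁻¹ (a + d) := by
      intro d
      induction d using Nat.strong_induction_on with
      | _ d ih =>
        intro a hd ha had hlt
        by_cases h1 : (a + 1) % r = 1
        · have ha0 : a % r = 0 := by
            have hm : (a % r + 1) % r = 1 := by rw [← haddm]; exact h1
            have hlt' : a % r < r := Nat.mod_lt _ hrpos
            rcases Nat.lt_or_ge (a % r + 1) r with h | h
            · rw [Nat.mod_eq_of_lt h] at hm; omega
            · have he : a % r + 1 = r := by omega
              rw [he, Nat.mod_self] at hm; omega
          have hd2 : 2 ≤ d := by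
            rcases Nat.lt_or_ge d 2 with h | h
            · exfalso; apply had
              have : d = 1 := by omega
              rw [this]; exact h1
            · exact h
          have hs : ofPerm π⁻¹ a < ofPerm π⁻¹ (a + 2) := hstep2 a ha0 (by omega)
          rcases Nat.eq_or_lt_of_le hd2 with he | hlt2
          · rwa [he] at hs
          · have ha2 : (a + 2) % r ≠ 1 := by
              have : (a + 2) % r = 2 % r := by
                rw [Nat.add_mod, ha0, Nat.zero_add, Nat.mod_mod_of_dvd]
                exact dvd_rfl
              rw [this]; exact h2r
            have h4 := ih (d - 2) (by omega) (a + 2) (by omega) ha2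
              (by rw [show a + 2 + (d - 2) = a + d by omega]; exact had)
              (by omega)
            rw [show a + 2 + (d - 2) = a + d by omega] at h4
            exact lt_trans hs h4
        · have hs : ofPerm π⁻¹ a < ofPerm π⁻¹ (a + 1) := hstep1 a ha h1 (by omega)
          rcases Nat.eq_or_lt_of_le hd with he | hlt1
          · subst he; exact hs
          · have h4 := ih (d - 1) (by omega) (a + 1) (by omega) h1
              (by rw [show a + 1 + (d - 1) = a + d by omega]; exact had)
              (by omega)
            rw [show a + 1 + (d - 1) = a + d by omega] at h4
            exact lt_trans hs h4
    have key' : ∀ a b, a < b → b < r * k + 1 → a % r ≠ 1 → b % r ≠ 1 →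
        ofPerm π⁻¹ a < ofPerm π⁻¹ b := by
      intro a b hab hb ha1 hb1
      have h := key (b - a) a (by omega) ha1
        (by rw [show a + (b - a) = b by omega]; exact hb1) (by omega)
      rwa [show a + (b - a) = b by omega] at h
    constructor
    · intro p q hpq hq hp2 hq2
      have hp : p < r * k + 1 := lt_trans hpq hq
      have ha : ofPerm π p < r * k + 1 := ofPerm_lt_s2 π hp
      have hb : ofPerm π q < r * k + 1 := ofPerm_lt_s2 π hq
      have hwa : ofPerm π⁻¹ (ofPerm π p) = p := ofPerm_inv_ofPerm π hp
      have hwb : ofPerm π⁻¹ (ofPerm π q) = q := ofPerm_inv_ofPerm π hq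
      have ha1 : ofPerm π p % r ≠ 1 := fun h => hp2 ((mod_succ_iff hr).mpr h)
      have hb1 : ofPerm π q % r ≠ 1 := fun h => hq2 ((mod_succ_iff hr).mpr h)
      by_contra hcon
      push_neg at hcon
      have hne : ofPerm π q ≠ ofPerm π p := by
        intro h
        rw [← hwa, ← hwb, h] at hpq
        omega
      have hba : ofPerm π q < ofPerm π p := lt_of_le_of_ne hcon hne
      have := key' _ _ hba ha hb1 ha1
      rw [hwa, hwb] at this
      omega
    · intro i hi p q hp hq hvp hvq
      have hvp' : ofPerm π p = r * i + 1 := by omega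
      have hvq' : ofPerm π q = r * i := by omega
      have hwa : ofPerm π⁻¹ (ofPerm π p) = p := ofPerm_inv_ofPerm π hp
      have hwb : ofPerm π⁻¹ (ofPerm π q) = q := ofPerm_inv_ofPerm π hq
      rw [hvp'] at hwa
      rw [hvq'] at hwb
      obtain ⟨h1', _, _⟩ := hc i hi
      rw [hwa, hwb] at h1'
      exact h1'
  · rintro ⟨h1, h2⟩ j hj
    have hjk : r * j + r ≤ r * k := by
      have h' : r * (j + 1) ≤ r * k := Nat.mul_le_mul_left r (by omega)
      have h'' : r * (j + 1) = r * j + r := by ring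
      omega
    have mono : ∀ a b, a < b → b < r * k + 1 → a % r ≠ 1 → b % r ≠ 1 →
        ofPerm π⁻¹ a < ofPerm π⁻¹ b := by
      intro a b hab hb ha1 hb1
      have ha : a < r * k + 1 := lt_trans hab hb
      have hpa : ofPerm π⁻¹ a < r * k + 1 := ofPerm_lt_s2 π⁻¹ ha
      have hpb : ofPerm π⁻¹ b < r * k + 1 := ofPerm_lt_s2 π⁻¹ hb
      have hva : ofPerm π (ofPerm π⁻¹ a) = a := ofPerm_ofPerm_inv π ha
      have hvb : ofPerm π (ofPerm π⁻¹ b) = b := ofPerm_ofPerm_inv π hb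
      by_contra hcon
      push_neg at hcon
      have hne : ofPerm π⁻¹ b ≠ ofPerm π⁻¹ a := by
        intro h
        rw [← hva, ← hvb, h] at hab
        omega
      have hlt : ofPerm π⁻¹ b < ofPerm π⁻¹ a := lt_of_le_of_ne hcon hne
      have := h1 _ _ hlt hpa
        (by rw [hvb]; exact fun h => hb1 ((mod_succ_iff hr).mp h))
        (by rw [hva]; exact fun h => ha1 ((mod_succ_iff hr).mp h))
      rw [hva, hvb] at this
      omega
    refine ⟨?_, ?_, ?_⟩
    · -- w (r*j+1) < w (r*j)
      have hb1 : r * j + 1 < r * k + 1 := by omega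
      have hb0 : r * j < r * k + 1 := by omega
      have hpa : ofPerm π⁻¹ (r * j + 1) < r * k + 1 := ofPerm_lt_s2 π⁻¹ hb1
      have hpb : ofPerm π⁻¹ (r * j) < r * k + 1 := ofPerm_lt_s2 π⁻¹ hb0
      exact h2 j hj _ _ hpa hpb
        (by rw [ofPerm_ofPerm_inv π hb1])
        (by rw [ofPerm_ofPerm_inv π hb0])
    · apply mono _ _ (by omega) (by omega)
      · rw [Nat.mul_mod_right]; omega
      · rw [Nat.mul_add_mod]; exact h2r
    · intro l hl2 hlr
      apply mono _ _ (by omega) (by omega)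
      · rw [Nat.mul_add_mod, Nat.mod_eq_of_lt hlr]; omega
      · rw [show r * j + l + 1 = r * j + (l + 1) by omega, Nat.mul_add_mod]
        rcases Nat.lt_or_ge (l + 1) r with h | h
        · rw [Nat.mod_eq_of_lt h]; omega
        · have : l + 1 = r := by omega
          rw [this, Nat.mod_self]; omega
end
end

section
/- A permutation π ∈ S_{rk+1} with r ≥ 2, k ≥ 1 satisfies: π^{-1} is a 2134⋯(r+1)-cluster if and only if for all a ∈ [rk]: (A) if a is congruent modulo r to one of 3, 4, ..., r, then π^{-1}(a) < π^{-1}(a+1); and (B) if a ≡ 1 (mod r), then π^{-1}(a) < π^{-1}(a+2) and π^{-1}(a) > π^{-1}(a+1). -/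
open scoped Classical

noncomputable section

lemma aux_mod_succ (b r : ℕ) (hr : 2 ≤ r) :
    (b + 1) % r = if b % r + 1 = r then 0 else b % r + 1 := by
  rw [Nat.add_mod, Nat.mod_eq_of_lt (show 1 < r by omega)]
  have hb : b % r < r := Nat.mod_lt _ (by omega)
  split
  · next h => rw [h, Nat.mod_self]
  · next h => exact Nat.mod_eq_of_lt (by omega)

lemma aux_cluster_iff (r k : ℕ) (hr : 2 ≤ r) (w : ℕ → ℕ) :
    IsCluster r k w ↔
      ∀ a, 1 ≤ a → a ≤ r * k →
        ((∃ c, 3 ≤ c ∧ c ≤ r ∧ a % r = c % r) → w (a - 1) < w a) ∧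
        (a % r = 1 % r → w (a - 1) < w (a + 1) ∧ w a < w (a - 1)) := by
  have hr0 : 0 < r := by omega
  have h1r : 1 % r = 1 := Nat.mod_eq_of_lt (by omega)
  constructor
  · intro h a ha1 ha2
    set b := a - 1 with hb
    have hab : a = b + 1 := by omega
    have hbk : b < r * k := by omega
    have hjk : b / r < k := Nat.div_lt_iff_lt_mul hr0 |>.2 (by
      calc b < r * k := hbk
      _ = k * r := Nat.mul_comm _ _)
    have hdm : r * (b / r) + b % r = b := Nat.div_add_mod b r
    have hmlt : b % r < r := Nat.mod_lt _ hr0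
    have hsucc := aux_mod_succ b r hr
    constructor
    · rintro ⟨c, hc3, hcr, hmod⟩
      have hl2 : 2 ≤ b % r := by
        rw [hab] at hmod
        by_cases hc : c = r
        · subst hc
          rw [Nat.mod_self] at hmod
          rw [hmod] at hsucc
          split at hsucc
          · omega
          · omega
        · have : c % r = c := Nat.mod_eq_of_lt (by omega)
          rw [this] at hmod
          rw [hmod] at hsucc
          split at hsucc
          · omega
          · omega
      have := (h (b / r) hjk).2.2 (b % r) hl2 hmlt
      rw [hdm] at this
      rw [hab]
      exact this
    · intro hmod
      rw [h1r, hab, hsucc] at hmod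
      have hl0 : b % r = 0 := by split at hmod <;> omega
      have hbeq : b = r * (b / r) := by omega
      obtain ⟨h1, h2, _⟩ := h (b / r) hjk
      rw [← hbeq] at h1 h2
      rw [hab]
      exact ⟨h2, h1⟩
  · intro h j hj
    have hjr : r * j + r ≤ r * k := by
      have h1 : r * (j + 1) ≤ r * k := Nat.mul_le_mul_left r (by omega)
      have h2 : r * (j + 1) = r * j + r := by ring
      omega
    obtain ⟨_, hB⟩ := h (r * j + 1) (by omega) (by omega)
    have hmodB : (r * j + 1) % r = 1 % r := Nat.mul_add_mod r j 1
    obtain ⟨hB1, hB2⟩ := hB hmodB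
    refine ⟨by simpa using hB2, by simpa using hB1, ?_⟩
    intro l hl2 hlr
    obtain ⟨hA, _⟩ := h (r * j + l + 1) (by omega) (by omega)
    have hmodA : (r * j + l + 1) % r = (l + 1) % r := by
      have : r * j + l + 1 = r * j + (l + 1) := by omega
      rw [this, Nat.mul_add_mod]
    have := hA ⟨l + 1, by omega, by omega, hmodA⟩
    simpa using this

/-- `π⁻¹` is a `2134⋯(r+1)`-cluster iff conditions (A) and (B) hold.
Here letters are 1-based, and the (0-based) position of the letter `a` in `π` is
`ofPerm π⁻¹ (a-1)`. -/
theorem stmt3 (r k : ℕ) (hr : 2 ≤ r) (hk : 1 ≤ k) (π : Equiv.Perm (Fin (r * k + 1))) :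
    IsCluster r k (ofPerm π⁻¹) ↔
      ∀ a, 1 ≤ a → a ≤ r * k →
        ((∃ c, 3 ≤ c ∧ c ≤ r ∧ a % r = c % r) →
            ofPerm π⁻¹ (a - 1) < ofPerm π⁻¹ a) ∧
        (a % r = 1 % r →
            ofPerm π⁻¹ (a - 1) < ofPerm π⁻¹ (a + 1) ∧
            ofPerm π⁻¹ a < ofPerm π⁻¹ (a - 1)) := by
  exact aux_cluster_iff r k hr (ofPerm π⁻¹)
end
end

section
/- Let r ≥ 2 and k ≥ 1, and let q_{r,k}(i,j) be the number of r-Stirling permutations of order k with exactly i leading plateaus and j ascent-plateaus. Then q_{r,k+1}(i,j) = j·q_{r,k}(i,j) + (i-j+1)·q_{r,k}(i,j-1) + (j+1)·q_{r,k}(i-1,j) + (rk-i-j+2)·q_{r,k}(i-1,j-1). -/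
open scoped Classical

noncomputable section

/-- `q_{r,k}(i,j)`: number of `r`-Stirling permutations of order `k` with
`i` leading plateaus and `j` ascent-plateaus. -/
def qnum (r k i j : ℕ) : ℕ :=
  ((stirlingSet r k).filter (fun ρ =>
    lplatNum (r * k) (ofWord ρ) = i ∧ ascplatNum (r * k) (ofWord ρ) = j)).card

/- ### word-level machinery -/

def insW (w : ℕ → ℕ) (p r v : ℕ) : ℕ → ℕ :=
  fun x => if x < p then w x else if x < p + r then v else w (x - r)

def delW (w : ℕ → ℕ) (p r : ℕ) : ℕ → ℕ :=
  fun x => if x < p then w x else w (x + r)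

def shiftF (p r : ℕ) : ℕ → ℕ := fun t => if t < p then t else t + r

def leadSet (n : ℕ) (w : ℕ → ℕ) : Finset ℕ :=
  (Finset.range (n - 1)).filter (fun t => w t = w (t + 1) ∧ ∀ j < t, w j ≠ w t)

def ascSet (n : ℕ) (w : ℕ → ℕ) : Finset ℕ :=
  (Finset.Ico 1 (n - 1)).filter (fun t => w (t - 1) < w t ∧ w t = w (t + 1))

lemma lplatNum_eq (n : ℕ) (w : ℕ → ℕ) : lplatNum n w = (leadSet n w).card := rfl
lemma ascplatNum_eq (n : ℕ) (w : ℕ → ℕ) : ascplatNum n w = (ascSet n w).card := rfl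

lemma insW_lt {w : ℕ → ℕ} {p r v x : ℕ} (h : x < p) : insW w p r v x = w x := by simp [insW, h]
lemma insW_block {w : ℕ → ℕ} {p r v x : ℕ} (h1 : p ≤ x) (h2 : x < p + r) : insW w p r v x = v := by
  simp [insW, Nat.not_lt.2 h1, h2]
lemma insW_ge {w : ℕ → ℕ} {p r v x : ℕ} (h : p + r ≤ x) : insW w p r v x = w (x - r) := by
  have h1 : ¬ x < p := by omega
  have h2 : ¬ x < p + r := by omega
  simp [insW, h1, h2]

lemma shiftF_inj (p r : ℕ) : Function.Injective (shiftF p r) := by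
  intro a b hab
  simp only [shiftF] at hab
  split_ifs at hab <;> omega

section WordLemmas

variable {w : ℕ → ℕ} {n r v p : ℕ}

lemma mem_leadSet {t : ℕ} :
    t ∈ leadSet n w ↔ t < n - 1 ∧ w t = w (t + 1) ∧ ∀ j < t, w j ≠ w t := by
  simp [leadSet, and_assoc]

lemma mem_ascSet {t : ℕ} :
    t ∈ ascSet n w ↔ 1 ≤ t ∧ t < n - 1 ∧ w (t - 1) < w t ∧ w t = w (t + 1) := by
  simp [ascSet, Finset.mem_Ico, and_assoc]

lemma leadSet_insW (hr : 2 ≤ r) (hp : p ≤ n)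
    (hw1 : ∀ x, x < n → 1 ≤ w x) (hwv : ∀ x, x < n → w x < v) :
    leadSet (n + r) (insW w p r v) =
      insert p (((leadSet n w).filter (fun t => t + 1 ≠ p)).image (shiftF p r)) := by
  ext x
  simp only [Finset.mem_insert, Finset.mem_image, Finset.mem_filter]
  constructor
  · rintro hx
    rw [mem_leadSet] at hx
    obtain ⟨hxr, hplat, hlead⟩ := hx
    rcases lt_trichotomy x p with hxp | hxp | hxp
    · -- x < p : old plateau, provided x+1 ≠ p
      right
      have hx1 : x + 1 ≠ p := by
        intro h
        rw [insW_lt hxp, insW_block (by omega) (by omega)] at hplat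
        exact absurd hplat (Nat.ne_of_lt (hwv x (by omega)))
      refine ⟨x, ⟨?_, hx1⟩, by simp [shiftF, hxp]⟩
      rw [mem_leadSet]
      rw [insW_lt hxp, insW_lt (by omega)] at hplat
      refine ⟨by omega, hplat, fun j hj => ?_⟩
      have := hlead j hj
      rwa [insW_lt (by omega), insW_lt hxp] at this
    · left; omega
    · -- x > p
      rcases Nat.lt_or_ge x (p + r) with hxb | hxb
      · -- inside block but not start: not leading
        exfalso
        have := hlead p hxp
        rw [insW_block le_rfl (by omega), insW_block (by omega) hxb] at this
        exact this rfl
      · right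
        have hx1 : p + r ≤ x + 1 := by omega
        rw [insW_ge hxb, insW_ge hx1] at hplat
        have hxx : x + 1 - r = (x - r) + 1 := by omega
        rw [hxx] at hplat
        refine ⟨x - r, ⟨?_, by omega⟩, ?_⟩
        · rw [mem_leadSet]
          refine ⟨by omega, hplat, fun j hj => ?_⟩
          rcases Nat.lt_or_ge j p with hjp | hjp
          · have := hlead j (by omega)
            rwa [insW_lt hjp, insW_ge hxb] at this
          · have := hlead (j + r) (by omega)
            rwa [insW_ge (by omega), insW_ge hxb, Nat.add_sub_cancel] at this
        · simp only [shiftF]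
          rw [if_neg (by omega)]
          omega
  · rintro (rfl | ⟨t, ⟨ht, ht1⟩, rfl⟩)
    · -- x = p is always leading
      rw [mem_leadSet]
      refine ⟨by omega, ?_, fun j hj => ?_⟩
      · rw [insW_block le_rfl (by omega), insW_block (by omega) (by omega)]
      · rw [insW_lt hj, insW_block le_rfl (by omega)]
        exact Nat.ne_of_lt (hwv j (by omega))
    · rw [mem_leadSet] at ht ⊢
      obtain ⟨htr, hplat, hlead⟩ := ht
      rcases Nat.lt_or_ge t p with htp | htp
      · have hst : shiftF p r t = t := by simp [shiftF, htp]
        rw [hst]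
        refine ⟨by omega, ?_, fun j hj => ?_⟩
        · rw [insW_lt htp, insW_lt (by omega)]; exact hplat
        · rw [insW_lt (by omega), insW_lt htp]; exact hlead j hj
      · have hst : shiftF p r t = t + r := by simp [shiftF]; omega
        rw [hst]
        refine ⟨by omega, ?_, fun j hj => ?_⟩
        · rw [insW_ge (by omega), insW_ge (by omega)]
          simpa [Nat.add_sub_cancel, show t + r + 1 - r = t + 1 by omega] using hplat
        · rw [show insW w p r v (t + r) = w t from by
            rw [insW_ge (by omega), Nat.add_sub_cancel]]
          rcases Nat.lt_or_ge j p with hjp | hjp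
          · rw [insW_lt hjp]; exact hlead j (by omega)
          · rcases Nat.lt_or_ge j (p + r) with hjb | hjb
            · rw [insW_block hjp hjb]
              exact fun h => absurd h.symm (Nat.ne_of_lt (hwv t (by omega)))
            · rw [insW_ge hjb]; exact hlead (j - r) (by omega)

lemma ascSet_insW_pos (hr : 2 ≤ r) (hp1 : 1 ≤ p) (hp : p ≤ n)
    (hwv : ∀ x, x < n → w x < v) (hw0 : ∀ x, n ≤ x → w x = 0) (hv : 1 ≤ v) :
    ascSet (n + r) (insW w p r v) =
      insert p (((ascSet n w).filter (fun t => t + 1 ≠ p ∧ t ≠ p)).image (shiftF p r)) := by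
  have hwv' : ∀ x, w x < v := by
    intro x
    rcases Nat.lt_or_ge x n with h | h
    · exact hwv x h
    · rw [hw0 x h]; omega
  ext x
  simp only [Finset.mem_insert, Finset.mem_image, Finset.mem_filter]
  constructor
  · rintro hx
    rw [mem_ascSet] at hx
    obtain ⟨hx1, hxr, hasc, hplat⟩ := hx
    rcases lt_trichotomy x p with hxp | hxp | hxp
    · -- x < p
      right
      have hx2 : x + 1 ≠ p := by
        intro h
        rw [insW_lt hxp, insW_block (by omega) (by omega)] at hplat
        exact absurd hplat (Nat.ne_of_lt (hwv' x))
      refine ⟨x, ⟨?_, hx2, by omega⟩, by simp [shiftF, hxp]⟩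
      rw [mem_ascSet]
      rw [insW_lt hxp, insW_lt (by omega)] at hplat
      rw [insW_lt hxp, insW_lt (by omega)] at hasc
      exact ⟨hx1, by omega, hasc, hplat⟩
    · left; omega
    · -- x > p
      rcases Nat.lt_or_ge x (p + r) with hxb | hxb
      · exfalso
        rw [insW_block (by omega) hxb, insW_block (by omega) (by omega)] at hasc
        omega
      · right
        have ht1 : p + r ≤ x + 1 := by omega
        rw [insW_ge hxb, insW_ge ht1, show x + 1 - r = (x - r) + 1 by omega] at hplat
        have hxm1 : p + r ≤ x - 1 := by
          by_contra h
          have hxe : x = p + r := by omega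
          rw [insW_block (by omega) (by omega), insW_ge hxb] at hasc
          exact absurd hasc (by have := hwv' (x - r); omega)
        rw [insW_ge hxm1, insW_ge hxb, show x - 1 - r = (x - r) - 1 by omega] at hasc
        refine ⟨x - r, ⟨?_, by omega, by omega⟩, ?_⟩
        · rw [mem_ascSet]
          exact ⟨by omega, by omega, hasc, hplat⟩
        · simp only [shiftF]; rw [if_neg (by omega)]; omega
  · rintro (rfl | ⟨t, ⟨ht, ht1, ht2⟩, rfl⟩)
    · rw [mem_ascSet]
      refine ⟨hp1, by omega, ?_, ?_⟩
      · rw [insW_lt (by omega), insW_block le_rfl (by omega)]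
        exact hwv' (x - 1)
      · rw [insW_block le_rfl (by omega), insW_block (by omega) (by omega)]
    · rw [mem_ascSet] at ht
      obtain ⟨htp1, htr, hasc, hplat⟩ := ht
      rw [mem_ascSet]
      rcases Nat.lt_or_ge t p with htp | htp
      · have hst : shiftF p r t = t := by simp [shiftF, htp]
        rw [hst]
        have htlt : t + 1 < p := by omega
        refine ⟨htp1, by omega, ?_, ?_⟩
        · rw [insW_lt (by omega), insW_lt htp]; exact hasc
        · rw [insW_lt htp, insW_lt htlt]; exact hplat
      · have htp' : p < t := by omega
        have hst : shiftF p r t = t + r := by simp only [shiftF]; rw [if_neg (by omega)]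
        rw [hst]
        refine ⟨by omega, by omega, ?_, ?_⟩
        · rw [show insW w p r v (t + r) = w t from by
            rw [insW_ge (by omega), Nat.add_sub_cancel],
            show insW w p r v (t + r - 1) = w (t - 1) from by
            rw [insW_ge (by omega), show t + r - 1 - r = t - 1 by omega]]
          exact hasc
        · rw [show insW w p r v (t + r) = w t from by
            rw [insW_ge (by omega), Nat.add_sub_cancel],
            show insW w p r v (t + r + 1) = w (t + 1) from by
            rw [insW_ge (by omega), show t + r + 1 - r = t + 1 by omega]]
          exact hplat

lemma ascSet_insW_zero (hr : 2 ≤ r) (hwv : ∀ x, x < n → w x < v) (hw0 : ∀ x, n ≤ x → w x = 0)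
    (hv : 1 ≤ v) :
    ascSet (n + r) (insW w 0 r v) = (ascSet n w).image (· + r) := by
  have hwv' : ∀ x, w x < v := by
    intro x
    rcases Nat.lt_or_ge x n with h | h
    · exact hwv x h
    · rw [hw0 x h]; omega
  ext x
  simp only [Finset.mem_image]
  constructor
  · rintro hx
    rw [mem_ascSet] at hx
    obtain ⟨hx1, hxr, hasc, hplat⟩ := hx
    rcases Nat.lt_or_ge x r with hxb | hxb
    · exfalso
      rcases Nat.lt_or_ge (x + 1) r with hx2 | hx2
      · rw [insW_block (by omega) (by omega), insW_block (by omega) (by omega)] at hasc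
        omega
      · have hxe : x = r - 1 := by omega
        rw [insW_block (by omega) (by omega), insW_ge (by omega)] at hplat
        exact absurd hplat.symm (Nat.ne_of_lt (hwv' (x + 1 - r)))
    · refine ⟨x - r, ?_, by omega⟩
      rw [mem_ascSet]
      rcases Nat.lt_or_ge (x - 1) r with hxm | hxm
      · exfalso
        have : x = r := by omega
        rw [insW_block (by omega) (by omega), insW_ge (by omega)] at hasc
        have := hwv' (x - r); omega
      · rw [insW_ge (by omega), insW_ge (by omega), show x - 1 - r = x - r - 1 by omega] at hasc
        rw [insW_ge (by omega), insW_ge (by omega), show x + 1 - r = x - r + 1 by omega] at hplat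
        exact ⟨by omega, by omega, hasc, hplat⟩
  · rintro ⟨t, ht, rfl⟩
    rw [mem_ascSet] at ht ⊢
    obtain ⟨htp1, htr, hasc, hplat⟩ := ht
    refine ⟨by omega, by omega, ?_, ?_⟩
    · rw [show insW w 0 r v (t + r) = w t from by
        rw [insW_ge (by omega), Nat.add_sub_cancel],
        show insW w 0 r v (t + r - 1) = w (t - 1) from by
        rw [insW_ge (by omega), show t + r - 1 - r = t - 1 by omega]]
      exact hasc
    · rw [show insW w 0 r v (t + r) = w t from by
        rw [insW_ge (by omega), Nat.add_sub_cancel],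
        show insW w 0 r v (t + r + 1) = w (t + 1) from by
        rw [insW_ge (by omega), show t + r + 1 - r = t + 1 by omega]]
      exact hplat

lemma ascSet_subset_leadSet (hS : ∀ a b c, a < b → b < c → c < n → w a = w c → w a ≤ w b) :
    ascSet n w ⊆ leadSet n w := by
  intro t ht
  rw [mem_ascSet] at ht
  obtain ⟨ht1, htr, hasc, hplat⟩ := ht
  rw [mem_leadSet]
  refine ⟨htr, hplat, fun j hj h => ?_⟩
  rcases Nat.lt_or_ge j (t - 1) with hj1 | hj1
  · have := hS j (t - 1) t hj1 (by omega) (by omega) h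
    omega
  · have : j = t - 1 := by omega
    subst this; omega

lemma ascSet_no_adjacent {t : ℕ} (ht : t ∈ ascSet n w) : t + 1 ∉ ascSet n w := by
  rw [mem_ascSet] at ht
  intro hc
  rw [mem_ascSet] at hc
  have h1 := hc.2.2.1
  rw [Nat.add_sub_cancel] at h1
  have h2 := ht.2.2.2
  omega

lemma leadSet_succ_not_asc {t : ℕ} (ht : t ∈ leadSet n w) : t + 1 ∉ ascSet n w := by
  rw [mem_leadSet] at ht
  intro hc
  rw [mem_ascSet] at hc
  have h1 := hc.2.2.1
  rw [Nat.add_sub_cancel] at h1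
  have h2 := ht.2.1
  omega

lemma ascSet_succ_not_lead {t : ℕ} (ht : t + 1 ∈ ascSet n w) : t ∉ leadSet n w := by
  intro h
  exact leadSet_succ_not_asc h ht

lemma lead_add_asc_le (hn : 1 ≤ n) :
    (leadSet n w).card + (ascSet n w).card ≤ n := by
  have hdisj : Disjoint (leadSet n w) ((ascSet n w).image (· + 1)) := by
    rw [Finset.disjoint_right]
    rintro x hx hl
    simp only [Finset.mem_image] at hx
    obtain ⟨t, ht, rfl⟩ := hx
    rw [mem_ascSet] at ht
    rw [mem_leadSet] at hl
    exact hl.2.2 t (by omega) (by omega)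
  have hsub : leadSet n w ∪ (ascSet n w).image (· + 1) ⊆ Finset.range n := by
    intro x hx
    rcases Finset.mem_union.1 hx with h | h
    · rw [mem_leadSet] at h; exact Finset.mem_range.2 (by omega)
    · simp only [Finset.mem_image] at h
      obtain ⟨t, ht, rfl⟩ := h
      rw [mem_ascSet] at ht
      exact Finset.mem_range.2 (by omega)
  calc (leadSet n w).card + (ascSet n w).card
      = (leadSet n w).card + ((ascSet n w).image (· + 1)).card := by
        rw [Finset.card_image_of_injective _ (fun a b => by omega)]
    _ = (leadSet n w ∪ (ascSet n w).image (· + 1)).card := (Finset.card_union_of_disjoint hdisj).symm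
    _ ≤ (Finset.range n).card := Finset.card_le_card hsub
    _ = n := Finset.card_range n

lemma shiftF_notin_image {p r : ℕ} (hr : 1 ≤ r) (s : Finset ℕ) : p ∉ s.image (shiftF p r) := by
  simp only [Finset.mem_image, not_exists]
  rintro t ⟨_, ht⟩
  simp only [shiftF] at ht
  split_ifs at ht <;> omega

lemma lplatNum_insW (hr : 2 ≤ r) (hp : p ≤ n)
    (hw1 : ∀ x, x < n → 1 ≤ w x) (hwv : ∀ x, x < n → w x < v) :
    lplatNum (n + r) (insW w p r v) =
      if 1 ≤ p ∧ p - 1 ∈ leadSet n w then lplatNum n w else lplatNum n w + 1 := by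
  rw [lplatNum_eq, lplatNum_eq, leadSet_insW hr hp hw1 hwv,
    Finset.card_insert_of_notMem (shiftF_notin_image (by omega) _),
    Finset.card_image_of_injective _ (shiftF_inj p r)]
  split_ifs with h
  · obtain ⟨hp1, hmem⟩ := h
    have : (leadSet n w).filter (fun t => t + 1 ≠ p) = (leadSet n w).erase (p - 1) := by
      ext t
      simp only [Finset.mem_filter, Finset.mem_erase]
      constructor
      · rintro ⟨ht, h2⟩; exact ⟨by omega, ht⟩
      · rintro ⟨h2, ht⟩; exact ⟨ht, by omega⟩
    rw [this, Finset.card_erase_of_mem hmem]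
    have : 0 < (leadSet n w).card := Finset.card_pos.2 ⟨p - 1, hmem⟩
    omega
  · have : (leadSet n w).filter (fun t => t + 1 ≠ p) = leadSet n w := by
      apply Finset.filter_true_of_mem
      intro t ht h2
      exact h ⟨by omega, by rw [show p - 1 = t by omega]; exact ht⟩
    rw [this]

lemma ascplatNum_insW (hr : 2 ≤ r) (hp : p ≤ n)
    (hwv : ∀ x, x < n → w x < v) (hw0 : ∀ x, n ≤ x → w x = 0) (hv : 1 ≤ v) :
    ascplatNum (n + r) (insW w p r v) =
      if p = 0 then ascplatNum n w
      else if (1 ≤ p ∧ p - 1 ∈ ascSet n w) ∨ p ∈ ascSet n w then ascplatNum n w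
      else ascplatNum n w + 1 := by
  rcases Nat.eq_zero_or_pos p with rfl | hp1
  · rw [if_pos rfl, ascplatNum_eq, ascplatNum_eq, ascSet_insW_zero hr hwv hw0 hv,
      Finset.card_image_of_injective _ (fun a b => by omega)]
  · rw [if_neg (by omega), ascplatNum_eq, ascplatNum_eq, ascSet_insW_pos hr hp1 hp hwv hw0 hv,
      Finset.card_insert_of_notMem (shiftF_notin_image (by omega) _),
      Finset.card_image_of_injective _ (shiftF_inj p r)]
    split_ifs with h
    · rcases h with ⟨_, hmem⟩ | hmem
      · have hnp : p ∉ ascSet n w := by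
          have := ascSet_no_adjacent hmem
          rwa [show p - 1 + 1 = p by omega] at this
        have : (ascSet n w).filter (fun t => t + 1 ≠ p ∧ t ≠ p) = (ascSet n w).erase (p - 1) := by
          ext t
          simp only [Finset.mem_filter, Finset.mem_erase]
          constructor
          · rintro ⟨ht, h2, h3⟩; exact ⟨by omega, ht⟩
          · rintro ⟨h2, ht⟩
            refine ⟨ht, by omega, fun hc => ?_⟩
            subst hc; exact hnp ht
        rw [this, Finset.card_erase_of_mem hmem]
        have : 0 < (ascSet n w).card := Finset.card_pos.2 ⟨p - 1, hmem⟩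
        omega
      · have hnp : p - 1 ∉ ascSet n w := by
          intro hc
          have := ascSet_no_adjacent hc
          rw [show p - 1 + 1 = p by omega] at this
          exact this hmem
        have : (ascSet n w).filter (fun t => t + 1 ≠ p ∧ t ≠ p) = (ascSet n w).erase p := by
          ext t
          simp only [Finset.mem_filter, Finset.mem_erase]
          constructor
          · rintro ⟨ht, h2, h3⟩; exact ⟨h3, ht⟩
          · rintro ⟨h2, ht⟩
            refine ⟨ht, fun hc => ?_, h2⟩
            rw [show t = p - 1 by omega] at ht
            exact hnp ht
        rw [this, Finset.card_erase_of_mem hmem]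
        have : 0 < (ascSet n w).card := Finset.card_pos.2 ⟨p, hmem⟩
        omega
    · push_neg at h
      have : (ascSet n w).filter (fun t => t + 1 ≠ p ∧ t ≠ p) = ascSet n w := by
        apply Finset.filter_true_of_mem
        intro t ht
        constructor
        · intro hc
          exact absurd (by rw [show p - 1 = t by omega]; exact ht) (h.1 (by omega))
        · intro hc; subst hc; exact h.2 ht
      rw [this]

def gfun (n i j i0 j0 : ℕ) : ℕ :=
  if i0 = i ∧ j0 = j then j
  else if i0 = i ∧ j0 + 1 = j then i0 - j0
  else if i0 + 1 = i ∧ j0 = j then j0 + 1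
  else if i0 + 1 = i ∧ j0 + 1 = j then n - i0 - j0
  else 0

lemma gap_count (hr : 2 ≤ r) (hn : 1 ≤ n)
    (hw1 : ∀ x, x < n → 1 ≤ w x) (hwv : ∀ x, x < n → w x < v) (hw0 : ∀ x, n ≤ x → w x = 0)
    (hv : 1 ≤ v)
    (hS : ∀ a b c, a < b → b < c → c < n → w a = w c → w a ≤ w b)
    (i j : ℕ) (hi : 1 ≤ i) (hj : 1 ≤ j) :
    ((Finset.range (n + 1)).filter (fun p =>
        lplatNum (n + r) (insW w p r v) = i ∧ ascplatNum (n + r) (insW w p r v) = j)).card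
      = gfun n i j (lplatNum n w) (ascplatNum n w) := by
  classical
  set L := leadSet n w with hL
  set A := ascSet n w with hA
  have hAL : A ⊆ L := ascSet_subset_leadSet hS
  have hcond : ∀ p, p ≤ n →
      ((lplatNum (n + r) (insW w p r v) = i ∧ ascplatNum (n + r) (insW w p r v) = j) ↔
        ((if 1 ≤ p ∧ p - 1 ∈ L then L.card else L.card + 1) = i ∧
         (if p = 0 then A.card else if (1 ≤ p ∧ p - 1 ∈ A) ∨ p ∈ A then A.card
          else A.card + 1) = j)) := by
    intro p hp
    rw [lplatNum_insW hr hp hw1 hwv, ascplatNum_insW hr hp hwv hw0 hv,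
      lplatNum_eq, ascplatNum_eq]
  rw [lplatNum_eq, ascplatNum_eq, ← hL, ← hA]
  set i0 := L.card with hi0
  set j0 := A.card with hj0
  -- membership facts
  have hAn : ∀ t ∈ A, 1 ≤ t ∧ t < n - 1 := by
    intro t ht; rw [hA, mem_ascSet] at ht; exact ⟨ht.1, ht.2.1⟩
  have hLn : ∀ t ∈ L, t < n - 1 := by
    intro t ht; rw [hL, mem_leadSet] at ht; exact ht.1
  by_cases hc1 : i0 = i ∧ j0 = j
  · rw [gfun, if_pos hc1]
    have hset : (Finset.range (n + 1)).filter (fun p =>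
        lplatNum (n + r) (insW w p r v) = i ∧ ascplatNum (n + r) (insW w p r v) = j)
        = A.image (· + 1) := by
      ext p
      simp only [Finset.mem_filter, Finset.mem_range, Finset.mem_image]
      constructor
      · rintro ⟨hpn, hcnd⟩
        rw [hcond p (by omega)] at hcnd
        obtain ⟨hci, hcj⟩ := hcnd
        have hdl : 1 ≤ p ∧ p - 1 ∈ L := by
          by_contra h
          rw [if_neg h] at hci
          omega
        have hp0 : p ≠ 0 := by omega
        rw [if_neg hp0] at hcj
        have hda : (1 ≤ p ∧ p - 1 ∈ A) ∨ p ∈ A := by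
          by_contra h
          rw [if_neg h] at hcj
          omega
        have hpA : p - 1 ∈ A := by
          rcases hda with h | h
          · exact h.2
          · exfalso
            have := leadSet_succ_not_asc (t := p - 1) hdl.2
            rw [show p - 1 + 1 = p by omega] at this
            exact this h
        exact ⟨p - 1, hpA, by omega⟩
      · rintro ⟨t, ht, rfl⟩
        have htA := hAn t ht
        refine ⟨by omega, ?_⟩
        rw [hcond _ (by omega)]
        have hdl : 1 ≤ t + 1 ∧ t + 1 - 1 ∈ L := ⟨by omega, by simpa using hAL ht⟩
        have hda : (1 ≤ t + 1 ∧ t + 1 - 1 ∈ A) ∨ t + 1 ∈ A := Or.inl ⟨by omega, by simpa using ht⟩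
        rw [if_pos hdl, if_neg (by omega), if_pos hda]
        exact ⟨hc1.1, hc1.2⟩
    rw [hset, Finset.card_image_of_injective _ (fun a b => by omega)]
    rw [← hj0, hc1.2]
  · by_cases hc2 : i0 = i ∧ j0 + 1 = j
    · rw [gfun, if_neg hc1, if_pos hc2]
      have hset : (Finset.range (n + 1)).filter (fun p =>
          lplatNum (n + r) (insW w p r v) = i ∧ ascplatNum (n + r) (insW w p r v) = j)
          = (L \ A).image (· + 1) := by
        ext p
        simp only [Finset.mem_filter, Finset.mem_range, Finset.mem_image, Finset.mem_sdiff]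
        constructor
        · rintro ⟨hpn, hcnd⟩
          rw [hcond p (by omega)] at hcnd
          obtain ⟨hci, hcj⟩ := hcnd
          have hdl : 1 ≤ p ∧ p - 1 ∈ L := by
            by_contra h
            rw [if_neg h] at hci
            omega
          have hp0 : p ≠ 0 := by omega
          rw [if_neg hp0] at hcj
          have hda : ¬ ((1 ≤ p ∧ p - 1 ∈ A) ∨ p ∈ A) := by
            intro h
            rw [if_pos h] at hcj
            omega
          push_neg at hda
          exact ⟨p - 1, ⟨hdl.2, fun hc => (hda.1 (by omega)) hc⟩, by omega⟩
        · rintro ⟨t, ⟨htL, htA⟩, rfl⟩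
          have htn := hLn t htL
          refine ⟨by omega, ?_⟩
          rw [hcond _ (by omega)]
          have hdl : 1 ≤ t + 1 ∧ t + 1 - 1 ∈ L := ⟨by omega, by simpa using htL⟩
          have hda : ¬ ((1 ≤ t + 1 ∧ t + 1 - 1 ∈ A) ∨ t + 1 ∈ A) := by
            push_neg
            refine ⟨fun _ => by simpa using htA, ?_⟩
            have := leadSet_succ_not_asc (t := t) htL
            exact this
          rw [if_pos hdl, if_neg (by omega), if_neg hda]
          exact ⟨hc2.1, hc2.2⟩
      rw [hset, Finset.card_image_of_injective _ (fun a b => by omega),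
        Finset.card_sdiff_of_subset hAL, ← hi0, ← hj0]
    · by_cases hc3 : i0 + 1 = i ∧ j0 = j
      · rw [gfun, if_neg hc1, if_neg hc2, if_pos hc3]
        have hset : (Finset.range (n + 1)).filter (fun p =>
            lplatNum (n + r) (insW w p r v) = i ∧ ascplatNum (n + r) (insW w p r v) = j)
            = insert 0 A := by
          ext p
          simp only [Finset.mem_filter, Finset.mem_range, Finset.mem_insert]
          constructor
          · rintro ⟨hpn, hcnd⟩
            rw [hcond p (by omega)] at hcnd
            obtain ⟨hci, hcj⟩ := hcnd
            have hdl : ¬ (1 ≤ p ∧ p - 1 ∈ L) := by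
              intro h
              rw [if_pos h] at hci
              omega
            rcases Nat.eq_zero_or_pos p with rfl | hp1
            · exact Or.inl rfl
            · right
              rw [if_neg (by omega)] at hcj
              have hda : (1 ≤ p ∧ p - 1 ∈ A) ∨ p ∈ A := by
                by_contra h
                rw [if_neg h] at hcj
                omega
              rcases hda with h | h
              · exact absurd ⟨h.1, hAL h.2⟩ hdl
              · exact h
          · rintro (rfl | hpA)
            · refine ⟨by omega, ?_⟩
              rw [hcond _ (by omega)]
              rw [if_neg (by omega), if_pos rfl]
              exact ⟨hc3.1, hc3.2⟩
            · have := hAn p hpA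
              refine ⟨by omega, ?_⟩
              rw [hcond _ (by omega)]
              have hdl : ¬ (1 ≤ p ∧ p - 1 ∈ L) := by
                rintro ⟨h1, h2⟩
                have := leadSet_succ_not_asc (t := p - 1) h2
                rw [show p - 1 + 1 = p by omega] at this
                exact this hpA
              rw [if_neg hdl, if_neg (by omega), if_pos (Or.inr hpA)]
              exact ⟨hc3.1, hc3.2⟩
        rw [hset, Finset.card_insert_of_notMem (fun h => by have := hAn 0 h; omega), ← hj0]
      · by_cases hc4 : i0 + 1 = i ∧ j0 + 1 = j
        · rw [gfun, if_neg hc1, if_neg hc2, if_neg hc3, if_pos hc4]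
          have hset : (Finset.range (n + 1)).filter (fun p =>
              lplatNum (n + r) (insW w p r v) = i ∧ ascplatNum (n + r) (insW w p r v) = j)
              = Finset.range (n + 1) \ ((L.image (· + 1)) ∪ insert 0 A) := by
            ext p
            simp only [Finset.mem_filter, Finset.mem_range, Finset.mem_sdiff, Finset.mem_union,
              Finset.mem_image, Finset.mem_insert]
            constructor
            · rintro ⟨hpn, hcnd⟩
              rw [hcond p (by omega)] at hcnd
              obtain ⟨hci, hcj⟩ := hcnd
              have hdl : ¬ (1 ≤ p ∧ p - 1 ∈ L) := by
                intro h
                rw [if_pos h] at hci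
                omega
              have hp0 : p ≠ 0 := by
                rintro rfl
                rw [if_pos rfl] at hcj
                omega
              rw [if_neg hp0] at hcj
              have hda : ¬ ((1 ≤ p ∧ p - 1 ∈ A) ∨ p ∈ A) := by
                intro h
                rw [if_pos h] at hcj
                omega
              push_neg at hda
              refine ⟨hpn, ?_⟩
              rintro (⟨t, htL, hte⟩ | rfl | h)
              · exact hdl ⟨by omega, by rw [show p - 1 = t by omega]; exact htL⟩
              · exact hp0 rfl
              · exact hda.2 h
            · rintro ⟨hpn, hnot⟩
              have hnL : ¬ ∃ t ∈ L, t + 1 = p := fun ⟨t, htL, hte⟩ => hnot (Or.inl ⟨t, htL, hte⟩)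
              have hp0 : p ≠ 0 := fun h => hnot (Or.inr (Or.inl h))
              have hpA : p ∉ A := fun h => hnot (Or.inr (Or.inr h))
              refine ⟨hpn, ?_⟩
              rw [hcond p (by omega)]
              have hdl : ¬ (1 ≤ p ∧ p - 1 ∈ L) := by
                rintro ⟨h1, h2⟩
                exact hnL ⟨p - 1, h2, by omega⟩
              have hda : ¬ ((1 ≤ p ∧ p - 1 ∈ A) ∨ p ∈ A) := by
                rintro (⟨h1, h2⟩ | h)
                · exact hnL ⟨p - 1, hAL h2, by omega⟩
                · exact hpA h
              rw [if_neg hdl, if_neg hp0, if_neg hda]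
              exact ⟨hc4.1, hc4.2⟩
          have hsub : (L.image (· + 1)) ∪ insert 0 A ⊆ Finset.range (n + 1) := by
            intro x hx
            rcases Finset.mem_union.1 hx with h | h
            · obtain ⟨t, htL, rfl⟩ := Finset.mem_image.1 h
              exact Finset.mem_range.2 (by have := hLn t htL; omega)
            · rcases Finset.mem_insert.1 h with rfl | h
              · exact Finset.mem_range.2 (by omega)
              · exact Finset.mem_range.2 (by have := hAn x h; omega)
          have hdisj : Disjoint (L.image (· + 1)) (insert 0 A) := by
            rw [Finset.disjoint_right]
            intro x hx hximg
            obtain ⟨t, htL, rfl⟩ := Finset.mem_image.1 hximg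
            rcases Finset.mem_insert.1 hx with h | h
            · omega
            · exact leadSet_succ_not_asc htL h
          have hcard : ((L.image (· + 1)) ∪ insert 0 A).card = i0 + 1 + j0 := by
            rw [Finset.card_union_of_disjoint hdisj,
              Finset.card_image_of_injective _ (fun a b => by omega),
              Finset.card_insert_of_notMem (fun h => by have := hAn 0 h; omega), ← hi0, ← hj0]
            ring
          rw [hset, Finset.card_sdiff_of_subset hsub, hcard, Finset.card_range]
          have hle := lead_add_asc_le (w := w) hn
          rw [← hL, ← hA, ← hi0, ← hj0] at hle
          omega
        · rw [gfun, if_neg hc1, if_neg hc2, if_neg hc3, if_neg hc4]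
          rw [Finset.card_eq_zero, Finset.filter_eq_empty_iff]
          intro p hp
          rw [Finset.mem_range] at hp
          rw [hcond p (by omega)]
          rintro ⟨hci, hcj⟩
          by_cases hdl : 1 ≤ p ∧ p - 1 ∈ L
          · rw [if_pos hdl] at hci
            by_cases hp0 : p = 0
            · omega
            · rw [if_neg hp0] at hcj
              by_cases hda : (1 ≤ p ∧ p - 1 ∈ A) ∨ p ∈ A
              · rw [if_pos hda] at hcj
                exact hc1 ⟨hci, hcj⟩
              · rw [if_neg hda] at hcj
                exact hc2 ⟨hci, hcj⟩
          · rw [if_neg hdl] at hci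
            by_cases hp0 : p = 0
            · rw [if_pos hp0] at hcj
              exact hc3 ⟨hci, hcj⟩
            · rw [if_neg hp0] at hcj
              by_cases hda : (1 ≤ p ∧ p - 1 ∈ A) ∨ p ∈ A
              · rw [if_pos hda] at hcj
                exact hc3 ⟨hci, hcj⟩
              · rw [if_neg hda] at hcj
                exact hc4 ⟨hci, hcj⟩

end WordLemmas

/- ### Fin-level bridge -/

lemma ofWord_lt' {n k : ℕ} (ρ : Fin n → Fin k) {x : ℕ} (h : x < n) :
    ofWord ρ x = (ρ ⟨x, h⟩ : ℕ) + 1 := dif_pos h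

lemma ofWord_ge' {n k : ℕ} (ρ : Fin n → Fin k) {x : ℕ} (h : n ≤ x) :
    ofWord ρ x = 0 := dif_neg (by omega)

lemma ofWord_pos {n k : ℕ} (ρ : Fin n → Fin k) {x : ℕ} (h : x < n) :
    1 ≤ ofWord ρ x ∧ ofWord ρ x ≤ k := by
  rw [ofWord_lt' ρ h]
  have := (ρ ⟨x, h⟩).isLt
  omega

lemma ofWord_inj {n k : ℕ} {ρ ρ' : Fin n → Fin k} (h : ofWord ρ = ofWord ρ') : ρ = ρ' := by
  funext x
  have := congrFun h x.val
  rw [ofWord_lt' ρ x.isLt, ofWord_lt' ρ' x.isLt] at this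
  simp only [Fin.eta] at this
  exact Fin.ext (by omega)

lemma card_fiber_eq {m k : ℕ} (ρ : Fin m → Fin k) (a : Fin k) :
    (Finset.univ.filter (fun x => ρ x = a)).card =
      ((Finset.range m).filter (fun x => ofWord ρ x = (a : ℕ) + 1)).card := by
  apply Finset.card_bij (fun (x : Fin m) _ => (x : ℕ))
  · intro x hx
    simp only [Finset.mem_filter, Finset.mem_univ, true_and] at hx
    simp only [Finset.mem_filter, Finset.mem_range]
    refine ⟨x.isLt, ?_⟩
    rw [ofWord_lt' ρ x.isLt]
    simp [hx]
  · intro x _ y _ h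
    exact Fin.ext h
  · intro b hb
    simp only [Finset.mem_filter, Finset.mem_range] at hb
    obtain ⟨hbm, hbw⟩ := hb
    rw [ofWord_lt' ρ hbm] at hbw
    refine ⟨⟨b, hbm⟩, ?_, rfl⟩
    simp only [Finset.mem_filter, Finset.mem_univ, true_and]
    exact Fin.ext (by omega)

lemma mem_stirling_iff {r k : ℕ} (ρ : Fin (r * k) → Fin k) :
    ρ ∈ stirlingSet r k ↔
      (∀ a : ℕ, 1 ≤ a → a ≤ k →
        ((Finset.range (r * k)).filter (fun x => ofWord ρ x = a)).card = r) ∧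
      (∀ a b c : ℕ, a < b → b < c → c < r * k →
        ofWord ρ a = ofWord ρ c → ofWord ρ a ≤ ofWord ρ b) := by
  simp only [stirlingSet, Finset.mem_filter, Finset.mem_univ, true_and]
  constructor
  · rintro ⟨hcnt, hord⟩
    constructor
    · intro a ha1 hak
      have := hcnt ⟨a - 1, by omega⟩
      rw [card_fiber_eq ρ ⟨a - 1, by omega⟩] at this
      simpa [show a - 1 + 1 = a by omega] using this
    · intro a b c hab hbc hcm he
      have ham : a < r * k := by omega
      have hbm : b < r * k := by omega
      rw [ofWord_lt' ρ ham, ofWord_lt' ρ hbm]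
      rw [ofWord_lt' ρ ham, ofWord_lt' ρ hcm] at he
      have heq : ρ ⟨a, ham⟩ = ρ ⟨c, hcm⟩ := Fin.ext (by omega)
      have := hord ⟨a, ham⟩ ⟨b, hbm⟩ ⟨c, hcm⟩ (Fin.mk_lt_mk.2 hab) (Fin.mk_lt_mk.2 hbc) heq
      have h2 := Fin.le_def.1 this
      omega
  · rintro ⟨hcnt, hord⟩
    constructor
    · intro a
      rw [card_fiber_eq ρ a]
      exact hcnt ((a : ℕ) + 1) (by omega) (by have := a.isLt; omega)
    · intro x y z hxy hyz he
      have he' : ofWord ρ x = ofWord ρ z := by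
        rw [ofWord_lt' ρ x.isLt, ofWord_lt' ρ z.isLt]
        simp only [Fin.eta]
        have : (ρ x : ℕ) = (ρ z : ℕ) := by rw [he]
        omega
      have := hord x y z (Fin.lt_def.1 hxy) (Fin.lt_def.1 hyz) z.isLt he'
      rw [ofWord_lt' ρ x.isLt, ofWord_lt' ρ y.isLt] at this
      simp only [Fin.eta] at this
      exact Fin.le_def.2 (by omega)

/- ### insertion and deletion maps -/

def insF (r k : ℕ) (ρ : Fin (r * k) → Fin k) (p : ℕ) : Fin (r * (k + 1)) → Fin (k + 1) :=
  fun x => ⟨min (insW (ofWord ρ) p r (k + 1) x.val - 1) k,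
    Nat.lt_succ_of_le (min_le_right _ _)⟩

def delF (r k : ℕ) (σ : Fin (r * (k + 1)) → Fin (k + 1)) (p : ℕ) : Fin (r * k) → Fin k :=
  fun x => ⟨(delW (ofWord σ) p r x.val - 1) % k,
    Nat.mod_lt _ (Nat.pos_of_ne_zero (fun h => absurd x.isLt (by subst h; simp)))⟩

lemma ofWord_insF {r k : ℕ} (ρ : Fin (r * k) → Fin k) {p : ℕ} (hp : p ≤ r * k) :
    ofWord (insF r k ρ p) = insW (ofWord ρ) p r (k + 1) := by
  funext x
  rcases Nat.lt_or_ge x (r * (k + 1)) with hx | hx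
  · rw [ofWord_lt' _ hx]
    simp only [insF]
    have hval : 1 ≤ insW (ofWord ρ) p r (k + 1) x ∧ insW (ofWord ρ) p r (k + 1) x ≤ k + 1 := by
      rcases Nat.lt_or_ge x p with h | h
      · rw [insW_lt h]
        have := ofWord_pos ρ (show x < r * k by omega)
        omega
      · rcases Nat.lt_or_ge x (p + r) with h2 | h2
        · rw [insW_block h h2]; omega
        · rw [insW_ge h2]
          have hxr : x - r < r * k := by
            have h9 : r * (k + 1) = r * k + r := by ring
            omega
          have := ofWord_pos ρ hxr
          omega
    omega
  · rw [ofWord_ge' _ hx]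
    have hge : p + r ≤ x := by
      have : r * (k + 1) = r * k + r := by ring
      omega
    rw [insW_ge hge]
    have h9 : r * (k + 1) = r * k + r := by ring
    exact (ofWord_ge' ρ (show r * k ≤ x - r by omega)).symm

lemma ofWord_delF {r k : ℕ} (σ : Fin (r * (k + 1)) → Fin (k + 1)) {p : ℕ} (hp : p ≤ r * k)
    (hval : ∀ x, x < r * k → 1 ≤ delW (ofWord σ) p r x ∧ delW (ofWord σ) p r x ≤ k) :
    ofWord (delF r k σ p) = delW (ofWord σ) p r := by
  funext x
  rcases Nat.lt_or_ge x (r * k) with hx | hx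
  · rw [ofWord_lt' _ hx]
    simp only [delF]
    have := hval x hx
    rw [Nat.mod_eq_of_lt (by omega)]
    omega
  · rw [ofWord_ge' _ hx]
    simp only [delW]
    rw [if_neg (by omega)]
    have h9 : r * (k + 1) = r * k + r := by ring
    exact (ofWord_ge' σ (show r * (k + 1) ≤ x + r by omega)).symm

/- ### insertion preserves the Stirling property -/

lemma insW_stirling {r k p : ℕ} (w : ℕ → ℕ) (hr : 2 ≤ r) (hp : p ≤ r * k)
    (hw1 : ∀ x, x < r * k → 1 ≤ w x ∧ w x ≤ k) (hw0 : ∀ x, r * k ≤ x → w x = 0)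
    (hcnt : ∀ a : ℕ, 1 ≤ a → a ≤ k →
      ((Finset.range (r * k)).filter (fun x => w x = a)).card = r)
    (hord : ∀ a b c : ℕ, a < b → b < c → c < r * k → w a = w c → w a ≤ w b) :
    (∀ a : ℕ, 1 ≤ a → a ≤ k + 1 →
      ((Finset.range (r * k + r)).filter (fun x => insW w p r (k + 1) x = a)).card = r) ∧
    (∀ a b c : ℕ, a < b → b < c → c < r * k + r →
      insW w p r (k + 1) a = insW w p r (k + 1) c →
      insW w p r (k + 1) a ≤ insW w p r (k + 1) b) := by
  set n := r * k with hn
  set v := k + 1 with hv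
  have hwneq : ∀ x, w x ≠ v := by
    intro x
    rcases Nat.lt_or_ge x n with h | h
    · have := hw1 x h; omega
    · rw [hw0 x h]; omega
  constructor
  · intro a ha1 hak
    rcases Nat.lt_or_ge a v with hav | hav
    · -- a ≤ k : old letter
      have : (Finset.range (n + r)).filter (fun x => insW w p r v x = a) =
          ((Finset.range n).filter (fun x => w x = a)).image (shiftF p r) := by
        ext x
        simp only [Finset.mem_filter, Finset.mem_range, Finset.mem_image]
        constructor
        · rintro ⟨hxr, hxa⟩
          rcases Nat.lt_or_ge x p with h | h
          · rw [insW_lt h] at hxa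
            refine ⟨x, ⟨by omega, hxa⟩, by simp [shiftF, h]⟩
          · rcases Nat.lt_or_ge x (p + r) with h2 | h2
            · rw [insW_block h h2] at hxa; omega
            · rw [insW_ge h2] at hxa
              have hxn : x - r < n := by
                by_contra hc
                rw [hw0 (x - r) (by omega)] at hxa
                omega
              refine ⟨x - r, ⟨hxn, hxa⟩, ?_⟩
              simp only [shiftF]
              rw [if_neg (by omega)]
              omega
        · rintro ⟨t, ⟨htn, hta⟩, rfl⟩
          simp only [shiftF]
          split_ifs with h
          · rw [insW_lt h]; exact ⟨by omega, hta⟩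
          · rw [insW_ge (by omega), Nat.add_sub_cancel]
            exact ⟨by omega, hta⟩
      rw [this, Finset.card_image_of_injective _ (shiftF_inj p r)]
      exact hcnt a ha1 (by omega)
    · -- a = v = k+1 : the block
      have hae : a = v := by omega
      subst hae
      have : (Finset.range (n + r)).filter (fun x => insW w p r v x = v) = Finset.Ico p (p + r) := by
        ext x
        simp only [Finset.mem_filter, Finset.mem_range, Finset.mem_Ico]
        constructor
        · rintro ⟨hxr, hxa⟩
          rcases Nat.lt_or_ge x p with h | h
          · rw [insW_lt h] at hxa; exact absurd hxa (hwneq x)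
          · rcases Nat.lt_or_ge x (p + r) with h2 | h2
            · exact ⟨h, h2⟩
            · rw [insW_ge h2] at hxa; exact absurd hxa (hwneq (x - r))
        · rintro ⟨h1, h2⟩
          exact ⟨by omega, insW_block h1 h2⟩
      rw [this, Nat.card_Ico]
      omega
  · intro a b c hab hbc hcr he
    by_cases hblock : p ≤ a ∧ a < p + r
    · -- value at a is v; then a,c in block so b in block
      rw [insW_block hblock.1 hblock.2] at he ⊢
      have hcblock : p ≤ c ∧ c < p + r := by
        by_contra hcb
        have : insW w p r v c ≠ v := by
          rcases Nat.lt_or_ge c p with h | h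
          · omega
          · rcases Nat.lt_or_ge c (p + r) with h2 | h2
            · exact absurd ⟨h, h2⟩ hcb
            · rw [insW_ge h2]; exact hwneq (c - r)
        exact this he.symm
      rw [insW_block (by omega) (by omega)]
    · -- value at a is an old letter
      have hva : insW w p r v a ≠ v := by
        rcases Nat.lt_or_ge a p with h | h
        · rw [insW_lt h]; exact hwneq a
        · rcases Nat.lt_or_ge a (p + r) with h2 | h2
          · exact absurd ⟨h, h2⟩ hblock
          · rw [insW_ge h2]; exact hwneq (a - r)
      have hcnb : ¬ (p ≤ c ∧ c < p + r) := by
        rintro ⟨h1, h2⟩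
        rw [insW_block h1 h2] at he
        exact hva he
      -- old indices
      have ha' : insW w p r v a = w (if a < p then a else a - r) := by
        split_ifs with h
        · exact insW_lt h
        · exact insW_ge (by omega)
      have hc' : insW w p r v c = w (if c < p then c else c - r) := by
        split_ifs with h
        · exact insW_lt h
        · exact insW_ge (by omega)
      by_cases hbblock : p ≤ b ∧ b < p + r
      · -- middle in block: value v, everything ≤ v... need insW a ≤ v
        rw [insW_block hbblock.1 hbblock.2]
        rw [ha']
        split_ifs with h
        · have := hw1 a (by omega); omega
        · rcases Nat.lt_or_ge (a - r) n with h2 | h2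
          · have := hw1 (a - r) h2; omega
          · rw [hw0 (a - r) h2]; omega
      · have hb' : insW w p r v b = w (if b < p then b else b - r) := by
          split_ifs with h
          · exact insW_lt h
          · exact insW_ge (by omega)
        rw [ha', hb']
        rw [ha', hc'] at he
        have hab' : (if a < p then a else a - r) < (if b < p then b else b - r) := by
          split_ifs <;> omega
        have hbc' : (if b < p then b else b - r) < (if c < p then c else c - r) := by
          split_ifs <;> omega
        have hc'n : (if c < p then c else c - r) < n := by
          split_ifs <;> omega
        exact hord _ _ _ hab' hbc' hc'n he

/- ### block structure of the maximal letter, and deletion -/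

section Deletion

variable {n r k : ℕ} {w : ℕ → ℕ}

lemma block_exists (hr : 2 ≤ r)
    (hw1 : ∀ x, x < n + r → 1 ≤ w x ∧ w x ≤ k + 1) (hw0 : ∀ x, n + r ≤ x → w x = 0)
    (hcnt : ((Finset.range (n + r)).filter (fun x => w x = k + 1)).card = r)
    (hord : ∀ a b c : ℕ, a < b → b < c → c < n + r → w a = w c → w a ≤ w b) :
    ∃ p, p ≤ n ∧ ∀ x, (w x = k + 1 ↔ p ≤ x ∧ x < p + r) := by
  set B := (Finset.range (n + r)).filter (fun x => w x = k + 1) with hB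
  have hBne : B.Nonempty := Finset.card_pos.1 (by omega)
  set p := B.min' hBne with hp
  set q := B.max' hBne with hq
  have hpB : p ∈ B := B.min'_mem hBne
  have hqB : q ∈ B := B.max'_mem hBne
  have hpq : p ≤ q := B.min'_le q hqB
  simp only [hB, Finset.mem_filter, Finset.mem_range] at hpB hqB
  have hBIcc : B = Finset.Icc p q := by
    apply Finset.Subset.antisymm
    · intro x hx
      exact Finset.mem_Icc.2 ⟨B.min'_le x hx, B.le_max' x hx⟩
    · intro x hx
      rw [Finset.mem_Icc] at hx
      rcases eq_or_lt_of_le hx.1 with rfl | hlt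
      · simp only [hB, Finset.mem_filter, Finset.mem_range]; exact ⟨hpB.1, hpB.2⟩
      · rcases eq_or_lt_of_le hx.2 with rfl | hlt2
        · simp only [hB, Finset.mem_filter, Finset.mem_range]; exact ⟨hqB.1, hqB.2⟩
        · have h1 := hord p x q hlt hlt2 hqB.1 (by rw [hpB.2, hqB.2])
          rw [hpB.2] at h1
          have h2 := (hw1 x (by omega)).2
          simp only [hB, Finset.mem_filter, Finset.mem_range]
          exact ⟨by omega, by omega⟩
  have hcard : q + 1 - p = r := by
    rw [hBIcc] at hcnt
    rwa [Nat.card_Icc] at hcnt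
  refine ⟨p, by omega, fun x => ?_⟩
  constructor
  · intro hx
    have hxm : x < n + r := by
      by_contra h
      rw [hw0 x (by omega)] at hx
      omega
    have hxB : x ∈ B := by
      simp only [hB, Finset.mem_filter, Finset.mem_range]; exact ⟨hxm, hx⟩
    rw [hBIcc, Finset.mem_Icc] at hxB
    omega
  · rintro ⟨h1, h2⟩
    have hxB : x ∈ B := by
      rw [hBIcc, Finset.mem_Icc]; omega
    simp only [hB, Finset.mem_filter, Finset.mem_range] at hxB
    exact hxB.2

lemma insW_delW {p : ℕ} (hblock : ∀ x, (w x = k + 1 ↔ p ≤ x ∧ x < p + r)) :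
    insW (delW w p r) p r (k + 1) = w := by
  funext x
  rcases Nat.lt_or_ge x p with h | h
  · rw [insW_lt h]
    simp [delW, h]
  · rcases Nat.lt_or_ge x (p + r) with h2 | h2
    · rw [insW_block h h2]
      exact ((hblock x).2 ⟨h, h2⟩).symm
    · rw [insW_ge h2]
      simp only [delW]
      rw [if_neg (by omega), show x - r + r = x by omega]

lemma delW_vals {p : ℕ} (hp : p ≤ n)
    (hw1 : ∀ x, x < n + r → 1 ≤ w x ∧ w x ≤ k + 1) (hw0 : ∀ x, n + r ≤ x → w x = 0)
    (hblock : ∀ x, (w x = k + 1 ↔ p ≤ x ∧ x < p + r)) :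
    (∀ x, x < n → 1 ≤ delW w p r x ∧ delW w p r x ≤ k) ∧ (∀ x, n ≤ x → delW w p r x = 0) := by
  constructor
  · intro x hx
    simp only [delW]
    split_ifs with h
    · have h1 := hw1 x (by omega)
      have h2 := (hblock x).not
      simp only [not_and, not_lt] at h2
      have : w x ≠ k + 1 := by
        intro hc
        have := (hblock x).1 hc
        omega
      omega
    · have h1 := hw1 (x + r) (by omega)
      have : w (x + r) ≠ k + 1 := by
        intro hc
        have := (hblock (x + r)).1 hc
        omega
      omega
  · intro x hx
    simp only [delW]
    rw [if_neg (by omega)]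
    exact hw0 (x + r) (by omega)

lemma delW_stirling {p : ℕ} (hr : 2 ≤ r) (hp : p ≤ n)
    (hw1 : ∀ x, x < n + r → 1 ≤ w x ∧ w x ≤ k + 1) (hw0 : ∀ x, n + r ≤ x → w x = 0)
    (hblock : ∀ x, (w x = k + 1 ↔ p ≤ x ∧ x < p + r))
    (hcnt : ∀ a : ℕ, 1 ≤ a → a ≤ k + 1 →
      ((Finset.range (n + r)).filter (fun x => w x = a)).card = r)
    (hord : ∀ a b c : ℕ, a < b → b < c → c < n + r → w a = w c → w a ≤ w b) :
    (∀ a : ℕ, 1 ≤ a → a ≤ k →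
      ((Finset.range n).filter (fun x => delW w p r x = a)).card = r) ∧
    (∀ a b c : ℕ, a < b → b < c → c < n → delW w p r a = delW w p r c →
      delW w p r a ≤ delW w p r b) := by
  constructor
  · intro a ha1 hak
    have : ((Finset.range (n + r)).filter (fun x => w x = a)) =
        ((Finset.range n).filter (fun x => delW w p r x = a)).image (shiftF p r) := by
      ext x
      simp only [Finset.mem_filter, Finset.mem_range, Finset.mem_image]
      constructor
      · rintro ⟨hxm, hxa⟩
        have hxnb : ¬ (p ≤ x ∧ x < p + r) := by
          intro hc
          rw [(hblock x).2 hc] at hxa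
          omega
        rcases Nat.lt_or_ge x p with h | h
        · refine ⟨x, ⟨by omega, ?_⟩, by simp [shiftF, h]⟩
          simp [delW, h, hxa]
        · have h2 : p + r ≤ x := by omega
          refine ⟨x - r, ⟨by omega, ?_⟩, ?_⟩
          · simp only [delW]
            rw [if_neg (by omega), show x - r + r = x by omega]
            exact hxa
          · simp only [shiftF]
            rw [if_neg (by omega)]
            omega
      · rintro ⟨t, ⟨htn, hta⟩, rfl⟩
        simp only [shiftF]
        simp only [delW] at hta
        split_ifs with h
        · rw [if_pos h] at hta
          exact ⟨by omega, hta⟩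
        · rw [if_neg h] at hta
          exact ⟨by omega, hta⟩
    have hc := hcnt a ha1 (by omega)
    rw [this, Finset.card_image_of_injective _ (shiftF_inj p r)] at hc
    exact hc
  · intro a b c hab hbc hcn he
    have hd : ∀ x, delW w p r x = w (shiftF p r x) := by
      intro x
      simp only [delW, shiftF]
      split_ifs <;> rfl
    rw [hd a, hd b]
    rw [hd a, hd c] at he
    have hmono : ∀ x y, x < y → shiftF p r x < shiftF p r y := by
      intro x y hxy
      simp only [shiftF]
      split_ifs <;> omega
    have hcn' : shiftF p r c < n + r := by
      simp only [shiftF]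
      split_ifs <;> omega
    exact hord _ _ _ (hmono a b hab) (hmono b c hbc) hcn' he

end Deletion

/- ### the main bijection -/

def bp (r k : ℕ) (σ : Fin (r * (k + 1)) → Fin (k + 1)) : ℕ :=
  sInf {x | ofWord σ x = k + 1}

lemma sigma_facts {r k : ℕ} (hr : 2 ≤ r) {σ : Fin (r * (k + 1)) → Fin (k + 1)}
    (hσ : σ ∈ stirlingSet r (k + 1)) :
    bp r k σ ≤ r * k ∧ (∀ x, (ofWord σ x = k + 1 ↔ bp r k σ ≤ x ∧ x < bp r k σ + r)) ∧
    delF r k σ (bp r k σ) ∈ stirlingSet r k ∧ insF r k (delF r k σ (bp r k σ)) (bp r k σ) = σ := by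
  have hm : r * (k + 1) = r * k + r := by ring
  rw [mem_stirling_iff] at hσ
  obtain ⟨hcnt, hord⟩ := hσ
  have hw1 : ∀ x, x < r * k + r → 1 ≤ ofWord σ x ∧ ofWord σ x ≤ k + 1 := by
    intro x hx
    exact ofWord_pos σ (by omega)
  have hw0 : ∀ x, r * k + r ≤ x → ofWord σ x = 0 := by
    intro x hx
    exact ofWord_ge' σ (by omega)
  have hcnt' : ∀ a : ℕ, 1 ≤ a → a ≤ k + 1 →
      ((Finset.range (r * k + r)).filter (fun x => ofWord σ x = a)).card = r := by
    intro a h1 h2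
    rw [show r * k + r = r * (k + 1) from by ring]
    exact hcnt a h1 h2
  have hord' : ∀ a b c : ℕ, a < b → b < c → c < r * k + r →
      ofWord σ a = ofWord σ c → ofWord σ a ≤ ofWord σ b := by
    intro a b c h1 h2 h3 h4
    exact hord a b c h1 h2 (by omega) h4
  obtain ⟨p, hpn, hblock⟩ := block_exists hr hw1 hw0 (hcnt' (k + 1) (by omega) le_rfl) hord'
  have hbp : bp r k σ = p := by
    apply le_antisymm
    · exact Nat.sInf_le ((hblock p).2 ⟨le_rfl, by omega⟩)
    · have hne : {x | ofWord σ x = k + 1}.Nonempty := ⟨p, (hblock p).2 ⟨le_rfl, by omega⟩⟩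
      have := Nat.sInf_mem hne
      exact ((hblock _).1 this).1
  rw [hbp]
  obtain ⟨hdval, hdzero⟩ := delW_vals hpn hw1 hw0 hblock
  obtain ⟨hdcnt, hdord⟩ := delW_stirling hr hpn hw1 hw0 hblock hcnt' hord'
  have hod : ofWord (delF r k σ p) = delW (ofWord σ) p r := ofWord_delF σ hpn hdval
  refine ⟨hpn, hblock, ?_, ?_⟩
  · rw [mem_stirling_iff, hod]
    exact ⟨hdcnt, hdord⟩
  · apply ofWord_inj
    rw [ofWord_insF _ hpn, hod, insW_delW hblock]

lemma rho_facts {r k : ℕ} (hr : 2 ≤ r) {ρ : Fin (r * k) → Fin k}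
    (hρ : ρ ∈ stirlingSet r k) {p : ℕ} (hp : p ≤ r * k) :
    insF r k ρ p ∈ stirlingSet r (k + 1) ∧ bp r k (insF r k ρ p) = p ∧
    delF r k (insF r k ρ p) p = ρ := by
  have hm : r * (k + 1) = r * k + r := by ring
  rw [mem_stirling_iff] at hρ
  obtain ⟨hcnt, hord⟩ := hρ
  have hw1 : ∀ x, x < r * k → 1 ≤ ofWord ρ x ∧ ofWord ρ x ≤ k := fun x hx => ofWord_pos ρ hx
  have hw0 : ∀ x, r * k ≤ x → ofWord ρ x = 0 := fun x hx => ofWord_ge' ρ hx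
  obtain ⟨hicnt, hiord⟩ := insW_stirling (ofWord ρ) hr hp hw1 hw0 hcnt hord
  have hoi : ofWord (insF r k ρ p) = insW (ofWord ρ) p r (k + 1) := ofWord_insF ρ hp
  have hblock : ∀ x, (ofWord (insF r k ρ p) x = k + 1 ↔ p ≤ x ∧ x < p + r) := by
    intro x
    rw [hoi]
    constructor
    · intro hx
      by_contra hc
      rcases Nat.lt_or_ge x p with h | h
      · rw [insW_lt h] at hx
        have := hw1 x (by omega)
        omega
      · rcases Nat.lt_or_ge x (p + r) with h2 | h2
        · exact hc ⟨h, h2⟩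
        · rw [insW_ge h2] at hx
          rcases Nat.lt_or_ge (x - r) (r * k) with h3 | h3
          · have := hw1 (x - r) h3; omega
          · rw [hw0 (x - r) h3] at hx; omega
    · rintro ⟨h1, h2⟩
      exact insW_block h1 h2
  have hmem : insF r k ρ p ∈ stirlingSet r (k + 1) := by
    rw [mem_stirling_iff, hoi]
    constructor
    · intro a h1 h2
      rw [hm]
      exact hicnt a h1 h2
    · intro a b c h1 h2 h3 h4
      exact hiord a b c h1 h2 (by omega) h4
  have hbp : bp r k (insF r k ρ p) = p := by
    apply le_antisymm
    · exact Nat.sInf_le ((hblock p).2 ⟨le_rfl, by omega⟩)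
    · have hne : {x | ofWord (insF r k ρ p) x = k + 1}.Nonempty :=
        ⟨p, (hblock p).2 ⟨le_rfl, by omega⟩⟩
      have := Nat.sInf_mem hne
      exact ((hblock _).1 this).1
  refine ⟨hmem, hbp, ?_⟩
  apply ofWord_inj
  have hdval : ∀ x, x < r * k →
      1 ≤ delW (ofWord (insF r k ρ p)) p r x ∧ delW (ofWord (insF r k ρ p)) p r x ≤ k := by
    intro x hx
    rw [hoi]
    have : delW (insW (ofWord ρ) p r (k + 1)) p r = ofWord ρ := by
      funext y
      simp only [delW]
      split_ifs with h
      · exact insW_lt h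
      · rw [insW_ge (by omega), Nat.add_sub_cancel]
    rw [this]
    exact hw1 x hx
  rw [ofWord_delF _ hp hdval, hoi]
  funext y
  simp only [delW]
  split_ifs with h
  · exact insW_lt h
  · rw [insW_ge (by omega), Nat.add_sub_cancel]

lemma qnum_succ_sum (r k : ℕ) (hr : 2 ≤ r) (i j : ℕ) :
    qnum r (k + 1) i j =
      ∑ ρ ∈ stirlingSet r k,
        ((Finset.range (r * k + 1)).filter (fun p =>
          lplatNum (r * k + r) (insW (ofWord ρ) p r (k + 1)) = i ∧
          ascplatNum (r * k + r) (insW (ofWord ρ) p r (k + 1)) = j)).card := by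
  classical
  have hm : r * (k + 1) = r * k + r := by ring
  rw [qnum]
  set T := (stirlingSet r (k + 1)).filter (fun σ =>
    lplatNum (r * (k + 1)) (ofWord σ) = i ∧ ascplatNum (r * (k + 1)) (ofWord σ) = j) with hT
  have hmap : ∀ σ ∈ T, delF r k σ (bp r k σ) ∈ stirlingSet r k := by
    intro σ hσ
    rw [hT, Finset.mem_filter] at hσ
    exact (sigma_facts hr hσ.1).2.2.1
  rw [Finset.card_eq_sum_card_fiberwise hmap]
  apply Finset.sum_congr rfl
  intro ρ hρ
  apply Finset.card_nbij' (i := fun σ => bp r k σ) (j := fun p => insF r k ρ p)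
  · -- forward membership
    intro σ hσ
    rw [Finset.mem_coe, Finset.mem_filter, hT, Finset.mem_filter] at hσ
    obtain ⟨⟨hσS, hstat⟩, hfib⟩ := hσ
    obtain ⟨hple, hblock, hdmem, hins⟩ := sigma_facts hr hσS
    simp only [Finset.mem_coe, Finset.mem_filter, Finset.mem_range]
    refine ⟨by omega, ?_⟩
    have how : insW (ofWord ρ) (bp r k σ) r (k + 1) = ofWord σ := by
      rw [← hfib]
      rw [← ofWord_insF (delF r k σ (bp r k σ)) hple, hins]
    rw [how, ← hm]
    exact hstat
  · -- backward membership
    intro p hp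
    simp only [Finset.mem_coe, Finset.mem_filter, Finset.mem_range] at hp
    obtain ⟨hpn, hstat⟩ := hp
    obtain ⟨hmem, hbp, hdel⟩ := rho_facts hr hρ (show p ≤ r * k by omega)
    rw [Finset.mem_coe, Finset.mem_filter, hT, Finset.mem_filter]
    refine ⟨⟨hmem, ?_⟩, ?_⟩
    · rw [ofWord_insF ρ (by omega), hm]
      exact hstat
    · rw [hbp, hdel]
  · -- left inverse
    intro σ hσ
    rw [Finset.mem_coe, Finset.mem_filter, hT, Finset.mem_filter] at hσ
    obtain ⟨⟨hσS, hstat⟩, hfib⟩ := hσ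
    obtain ⟨hple, hblock, hdmem, hins⟩ := sigma_facts hr hσS
    rw [← hfib]
    exact hins
  · -- right inverse
    intro p hp
    simp only [Finset.mem_coe, Finset.mem_filter, Finset.mem_range] at hp
    exact (rho_facts hr hρ (show p ≤ r * k by omega)).2.1

/- ### final assembly -/

/-- the recurrence for `q_{r,k}(i,j)`. -/
theorem stmt5 (r k : ℕ) (hr : 2 ≤ r) (hk : 1 ≤ k) (i j : ℕ) (hi : 1 ≤ i) (hj : 1 ≤ j) :
    (qnum r (k + 1) i j : ℤ) =
      (j : ℤ) * qnum r k i j + ((i : ℤ) - j + 1) * qnum r k i (j - 1)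
        + ((j : ℤ) + 1) * qnum r k (i - 1) j
        + ((r : ℤ) * k - i - j + 2) * qnum r k (i - 1) (j - 1) := by
  classical
  have hn : 1 ≤ r * k := by
    have : 1 * 1 ≤ r * k := Nat.mul_le_mul (by omega) hk
    omega
  have hstep : qnum r (k + 1) i j = ∑ ρ ∈ stirlingSet r k,
      gfun (r * k) i j (lplatNum (r * k) (ofWord ρ)) (ascplatNum (r * k) (ofWord ρ)) := by
    rw [qnum_succ_sum r k hr i j]
    apply Finset.sum_congr rfl
    intro ρ hρ
    have hSt := ((mem_stirling_iff ρ).1 hρ).2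
    exact gap_count hr hn (fun x hx => (ofWord_pos ρ hx).1)
      (fun x hx => by have := (ofWord_pos ρ hx).2; omega)
      (fun x hx => ofWord_ge' ρ hx) (by omega) hSt i j hi hj
  have hsum2 : ∑ ρ ∈ stirlingSet r k,
      gfun (r * k) i j (lplatNum (r * k) (ofWord ρ)) (ascplatNum (r * k) (ofWord ρ))
      = j * qnum r k i j + (i - (j - 1)) * qnum r k i (j - 1)
        + (j + 1) * qnum r k (i - 1) j
        + (r * k - (i - 1) - (j - 1)) * qnum r k (i - 1) (j - 1) := by
    have hterm : ∀ ρ ∈ stirlingSet r k,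
        gfun (r * k) i j (lplatNum (r * k) (ofWord ρ)) (ascplatNum (r * k) (ofWord ρ))
        = (if lplatNum (r * k) (ofWord ρ) = i ∧ ascplatNum (r * k) (ofWord ρ) = j
              then j else 0)
          + (if lplatNum (r * k) (ofWord ρ) = i ∧ ascplatNum (r * k) (ofWord ρ) = j - 1
              then i - (j - 1) else 0)
          + (if lplatNum (r * k) (ofWord ρ) = i - 1 ∧ ascplatNum (r * k) (ofWord ρ) = j
              then j + 1 else 0)
          + (if lplatNum (r * k) (ofWord ρ) = i - 1 ∧ ascplatNum (r * k) (ofWord ρ) = j - 1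
              then r * k - (i - 1) - (j - 1) else 0) := by
      intro ρ _
      rw [gfun]
      split_ifs <;> omega
    rw [Finset.sum_congr rfl hterm, Finset.sum_add_distrib, Finset.sum_add_distrib,
      Finset.sum_add_distrib]
    have e1 : ∑ x ∈ stirlingSet r k,
        (if lplatNum (r * k) (ofWord x) = i ∧ ascplatNum (r * k) (ofWord x) = j
          then j else 0) = j * qnum r k i j := by
      rw [← Finset.sum_filter, Finset.sum_const, smul_eq_mul, mul_comm]
      rfl
    have e2 : ∑ x ∈ stirlingSet r k,
        (if lplatNum (r * k) (ofWord x) = i ∧ ascplatNum (r * k) (ofWord x) = j - 1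
          then i - (j - 1) else 0) = (i - (j - 1)) * qnum r k i (j - 1) := by
      rw [← Finset.sum_filter, Finset.sum_const, smul_eq_mul, mul_comm]
      rfl
    have e3 : ∑ x ∈ stirlingSet r k,
        (if lplatNum (r * k) (ofWord x) = i - 1 ∧ ascplatNum (r * k) (ofWord x) = j
          then j + 1 else 0) = (j + 1) * qnum r k (i - 1) j := by
      rw [← Finset.sum_filter, Finset.sum_const, smul_eq_mul, mul_comm]
      rfl
    have e4 : ∑ x ∈ stirlingSet r k,
        (if lplatNum (r * k) (ofWord x) = i - 1 ∧ ascplatNum (r * k) (ofWord x) = j - 1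
          then r * k - (i - 1) - (j - 1) else 0)
        = (r * k - (i - 1) - (j - 1)) * qnum r k (i - 1) (j - 1) := by
      rw [← Finset.sum_filter, Finset.sum_const, smul_eq_mul, mul_comm]
      rfl
    rw [e1, e2, e3, e4]
  -- nonvacuity facts for the casts
  have hfacts : ∀ ρ ∈ stirlingSet r k,
      ascplatNum (r * k) (ofWord ρ) ≤ lplatNum (r * k) (ofWord ρ) ∧
      lplatNum (r * k) (ofWord ρ) + ascplatNum (r * k) (ofWord ρ) ≤ r * k := by
    intro ρ hρ
    have hSt := ((mem_stirling_iff ρ).1 hρ).2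
    rw [lplatNum_eq, ascplatNum_eq]
    exact ⟨Finset.card_le_card (ascSet_subset_leadSet hSt),
      lead_add_asc_le (w := ofWord ρ) (n := r * k) hn⟩
  have hc2 : qnum r k i (j - 1) ≠ 0 → j - 1 ≤ i := by
    intro h
    obtain ⟨ρ, hρ⟩ := Finset.card_pos.1 (Nat.pos_of_ne_zero h)
    have hm := Finset.mem_filter.1 hρ
    have := (hfacts ρ hm.1).1
    omega
  have hc4 : qnum r k (i - 1) (j - 1) ≠ 0 → (i - 1) + (j - 1) ≤ r * k := by
    intro h
    obtain ⟨ρ, hρ⟩ := Finset.card_pos.1 (Nat.pos_of_ne_zero h)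
    have hm := Finset.mem_filter.1 hρ
    have := (hfacts ρ hm.1).2
    omega
  have hcast2 : ((i - (j - 1) : ℕ) : ℤ) * (qnum r k i (j - 1) : ℤ)
      = ((i : ℤ) - j + 1) * (qnum r k i (j - 1) : ℤ) := by
    rcases Nat.eq_zero_or_pos (qnum r k i (j - 1)) with h | h
    · simp [h]
    · have hle := hc2 (by omega)
      have h9 : ((i - (j - 1) : ℕ) : ℤ) = (i : ℤ) - j + 1 := by omega
      rw [h9]
  have hcast4 : ((r * k - (i - 1) - (j - 1) : ℕ) : ℤ) * (qnum r k (i - 1) (j - 1) : ℤ)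
      = ((r : ℤ) * k - i - j + 2) * (qnum r k (i - 1) (j - 1) : ℤ) := by
    rcases Nat.eq_zero_or_pos (qnum r k (i - 1) (j - 1)) with h | h
    · simp [h]
    · have hle := hc4 (by omega)
      have h9 : ((r * k - (i - 1) - (j - 1) : ℕ) : ℤ) = ((r * k : ℕ) : ℤ) - i - j + 2 := by
        omega
      rw [h9]
      push_cast
      ring
  rw [hstep, hsum2]
  push_cast
  rw [hcast2, hcast4]
end
end
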